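/- arXiv:2506.03805 — 8 statements merged into one kernel-verified Lean document; each statement's English description precedes it below -/
import Mathlib

section
/- Let C be a linear code over F_q of dimension k with minimum distance d, and let D be a j-dimensional subcode of C (1 ≤ j ≤ k). Then the support of D has size at least ∑_{i=0}^{j-1} ⌈d/q^i⌉. Consequently, the j-th generalised Hamming weight d_j(C) satisfies d_j(C) ≥ ∑_{i=0}^{j-1} ⌈d/q^i⌉. -/
open Finset

lemma ceil_cast_div_nat (x : ℚ) (c : ℕ) (hc : 0 < c) :
    ⌈(⌈x⌉ : ℚ) / (c : ℚ)⌉ = ⌈x / (c : ℚ)⌉ := by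
  have hc' : (0:ℚ) < c := by exact_mod_cast hc
  refine eq_of_forall_ge_iff fun m => ?_
  rw [Int.ceil_le, Int.ceil_le, div_le_iff₀ hc', div_le_iff₀ hc',
      show (m:ℚ) * c = ((m * c : ℤ) : ℚ) by push_cast; ring, Int.cast_le, Int.ceil_le]

theorem griesmer_aux {F : Type*} [Field F] [Fintype F] [DecidableEq F] :
    ∀ (j : ℕ) (ι : Type) (_ : Fintype ι) (_ : DecidableEq ι) (w : ℕ)
      (D : Submodule F (ι → F)),
      j ≤ Module.finrank F ↥D →
      (∀ c ∈ D, c ≠ 0 → w ≤ hammingNorm c) →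
      (∑ i ∈ Finset.range j, ⌈(w : ℚ) / (Fintype.card F : ℚ) ^ i⌉) ≤ (Fintype.card ι : ℤ)
  | 0 => by intro ι _ _ w D _ _; simp
  | (j+1) => by
    intro ι _ _ w D hrank hmin
    classical
    set q := Fintype.card F with hqdef
    have hq : 1 < q := Fintype.one_lt_card
    have hq0 : (0:ℚ) < q := by exact_mod_cast Nat.lt_of_lt_of_le Nat.zero_lt_one hq.le
    -- a nonzero element exists
    have hne : ∃ x, x ∈ D ∧ x ≠ 0 := by
      by_contra h
      push_neg at h
      have : D = ⊥ := by
        rw [Submodule.eq_bot_iff]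
        intro x hx
        by_contra hx0
        exact hx0 (h x hx)
      rw [this] at hrank
      simp at hrank
    -- minimal weight element
    set S : Set ℕ := {m | ∃ x, (x ∈ D ∧ x ≠ 0) ∧ hammingNorm x = m} with hSdef
    have hSne : S.Nonempty := by
      obtain ⟨x, hx⟩ := hne
      exact ⟨hammingNorm x, x, hx, rfl⟩
    set w' := sInf S with hw'def
    obtain ⟨c, ⟨hcD, hc0⟩, hcw⟩ : ∃ x, (x ∈ D ∧ x ≠ 0) ∧ hammingNorm x = w' :=
      Nat.sInf_mem hSne
    have hmin' : ∀ x ∈ D, x ≠ 0 → w' ≤ hammingNorm x := fun x hx hx0 =>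
      Nat.sInf_le ⟨x, ⟨hx, hx0⟩, rfl⟩
    have hww' : w ≤ w' := hcw ▸ hmin c hcD hc0
    -- reduce to w'
    suffices h : (∑ i ∈ Finset.range (j+1), ⌈(w' : ℚ) / (q : ℚ) ^ i⌉) ≤ (Fintype.card ι : ℤ) by
      refine le_trans (Finset.sum_le_sum fun i _ => ?_) h
      exact Int.ceil_le_ceil (by gcongr)
    -- residual code
    set ι' := {i : ι // c i = 0} with hι'def
    set π : (ι → F) →ₗ[F] (ι' → F) := LinearMap.funLeft F F (fun i : ι' => (i : ι)) with hπdef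
    have hπapp : ∀ (z : ι → F) (i : ι'), π z i = z i := fun z i => rfl
    have hπc : π c = 0 := funext fun i => i.2
    set D' := D.map π with hD'def
    have hcard : (Fintype.card ι' : ℤ) = (Fintype.card ι : ℤ) - w' := by
      have h1 : Fintype.card ι' = #(univ.filter (fun i => c i = 0)) := Fintype.card_subtype _
      have h2 : hammingNorm c = #(univ.filter (fun i => ¬ (c i = 0))) := rfl
      have h3 := Finset.card_filter_add_card_filter_not
        (s := (univ : Finset ι)) (p := fun i => c i = 0)
      have h4 : #(univ : Finset ι) = Fintype.card ι := Finset.card_univ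
      have h5 : hammingNorm c = w' := hcw
      omega
    -- kernel is contained in the span of c
    have hker : ∀ x ∈ D, π x = 0 → x ∈ Submodule.span F {c} := by
      intro x hx hx0
      obtain ⟨i₀, hi₀⟩ : ∃ i₀, c i₀ ≠ 0 := by
        by_contra h
        push_neg at h
        exact hc0 (funext h)
      set α := x i₀ / c i₀ with hαdef
      set y := x - α • c with hydef
      have hyD : y ∈ D := D.sub_mem hx (D.smul_mem _ hcD)
      have hy0 : ∀ i, c i = 0 → y i = 0 := by
        intro i hci
        have hxi : x i = 0 := congrFun hx0 ⟨i, hci⟩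
        simp [hydef, hxi, hci]
      have hyi₀ : y i₀ = 0 := by
        simp [hydef, hαdef, div_mul_cancel₀ _ hi₀]
      have hyzero : y = 0 := by
        by_contra hyne
        have h1 : w' ≤ hammingNorm y := hmin' y hyD hyne
        have h2 : hammingNorm y < w' := by
          have hsub : (univ.filter (fun i => ¬ (y i = 0))) ⊆
              (univ.filter (fun i => ¬ (c i = 0))).erase i₀ := by
            intro i hi
            simp only [mem_filter, mem_univ, true_and, mem_erase] at hi ⊢
            refine ⟨?_, fun hci => hi (hy0 i hci)⟩
            rintro rfl
            exact hi hyi₀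
          have h4 : hammingNorm y ≤ #((univ.filter (fun i => ¬ (c i = 0))).erase i₀) :=
            Finset.card_le_card hsub
          have h5 : #((univ.filter (fun i => ¬ (c i = 0))).erase i₀) = hammingNorm c - 1 :=
            Finset.card_erase_of_mem (by simp [hi₀])
          have h6 : 0 < hammingNorm c := hammingNorm_pos_iff.mpr hc0
          omega
        omega
      have : x = α • c := by
        have := sub_eq_zero.mp hyzero
        exact this
      exact Submodule.mem_span_singleton.mpr ⟨α, this.symm⟩
    -- rank of residual
    have hrank' : j ≤ Module.finrank F ↥D' := by
      have hrn := LinearMap.finrank_range_add_finrank_ker (π.domRestrict D)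
      rw [LinearMap.range_domRestrict] at hrn
      rw [show Submodule.map π D = D' from rfl] at hrn
      have hkle : Module.finrank F ↥(LinearMap.ker (π.domRestrict D)) ≤ 1 := by
        have hle : LinearMap.ker (π.domRestrict D) ≤
            Submodule.comap D.subtype (Submodule.span F {c}) := by
          intro z hz
          exact hker z.1 z.2 hz
        refine le_trans (Submodule.finrank_mono hle) ?_
        have he : Module.finrank F ↥(Submodule.comap D.subtype (Submodule.span F {c})) =
            Module.finrank F ↥(D ⊓ Submodule.span F {c}) := by
          rw [← Submodule.map_comap_subtype]
          exact (Submodule.finrank_map_subtype_eq D _).symm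
        rw [he]
        refine le_trans (Submodule.finrank_mono inf_le_right) ?_
        rw [finrank_span_singleton hc0]
      omega
    -- residual minimum distance
    set d' : ℕ := (⌈(w' : ℚ) / (q : ℚ)⌉).toNat with hd'def
    have hd'cast : (d' : ℤ) = ⌈(w' : ℚ) / (q : ℚ)⌉ :=
      Int.toNat_of_nonneg (Int.ceil_nonneg (by positivity))
    have hdist : ∀ y ∈ D', y ≠ 0 → d' ≤ hammingNorm y := by
      intro y hy hy0
      obtain ⟨x, hxD, rfl⟩ := Submodule.mem_map.mp hy
      -- each translate is nonzero
      have hnz : ∀ α : F, w' ≤ hammingNorm (x - α • c) := by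
        intro α
        refine hmin' _ (D.sub_mem hxD (D.smul_mem _ hcD)) ?_
        intro h
        apply hy0
        have : x = α • c := sub_eq_zero.mp h
        rw [this, map_smul, hπc, smul_zero]
      have step2 : q * w' ≤ ∑ α : F, hammingNorm (x - α • c) := by
        calc q * w' = ∑ _α : F, w' := by rw [Finset.sum_const, Finset.card_univ, smul_eq_mul]
        _ ≤ _ := Finset.sum_le_sum fun α _ => hnz α
      -- compute the sum
      have hnπ : hammingNorm (π x) = #(univ.filter (fun i : ι => c i = 0 ∧ x i ≠ 0)) := by
        refine Finset.card_bij (fun i' _ => i'.1) ?_ ?_ ?_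
        · intro i' hi'
          simp only [mem_filter, mem_univ, true_and] at hi' ⊢
          exact ⟨i'.2, hi'⟩
        · intro a ha b hb hab
          exact Subtype.ext hab
        · intro i hi
          simp only [mem_filter, mem_univ, true_and] at hi
          exact ⟨⟨i, hi.1⟩, Finset.mem_filter.mpr ⟨Finset.mem_univ _, hi.2⟩, rfl⟩
      have step3 : ∑ α : F, hammingNorm (x - α • c) = (q - 1) * w' + q * hammingNorm (π x) := by
        have hexp : ∀ z : ι → F, hammingNorm z = ∑ i : ι, if z i ≠ 0 then 1 else 0 := by
          intro z
          rw [hammingNorm]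
          simp [Finset.card_filter]
        calc ∑ α : F, hammingNorm (x - α • c)
            = ∑ α : F, ∑ i : ι, if x i - α * c i ≠ 0 then 1 else 0 := by
              refine Finset.sum_congr rfl fun α _ => ?_
              rw [hexp]
              refine Finset.sum_congr rfl fun i _ => by simp [Pi.sub_apply, Pi.smul_apply,
                smul_eq_mul]
          _ = ∑ i : ι, ∑ α : F, if x i - α * c i ≠ 0 then 1 else 0 := Finset.sum_comm
          _ = (∑ i ∈ univ.filter (fun i => ¬ (c i = 0)), ∑ α : F,
                if x i - α * c i ≠ 0 then 1 else 0)
              + ∑ i ∈ univ.filter (fun i => c i = 0), ∑ α : F,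
                if x i - α * c i ≠ 0 then 1 else 0 := by
              rw [add_comm, Finset.sum_filter_add_sum_filter_not]
          _ = (q - 1) * w' + q * hammingNorm (π x) := by
              congr 1
              · -- coordinates in the support of c
                have hconst : ∀ i ∈ univ.filter (fun i => ¬ (c i = 0)),
                    (∑ α : F, if x i - α * c i ≠ 0 then 1 else 0) = q - 1 := by
                  intro i hi
                  simp only [mem_filter, mem_univ, true_and] at hi
                  have heq : ∀ α : F, (x i - α * c i ≠ 0) ↔ α ≠ x i / c i := by
                    intro α
                    rw [sub_ne_zero]
                    constructor
                    · intro h hα; apply h; rw [hα, div_mul_cancel₀ _ hi]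
                    · intro h hα; apply h; field_simp [hα]; exact hα.symm
                  calc (∑ α : F, if x i - α * c i ≠ 0 then 1 else 0)
                      = #(univ.filter (fun α : F => α ≠ x i / c i)) := by
                        rw [Finset.card_filter]
                        exact Finset.sum_congr rfl fun α _ => if_congr (heq α) rfl rfl
                    _ = q - 1 := by
                        rw [Finset.filter_ne', Finset.card_erase_of_mem (mem_univ _),
                          Finset.card_univ]
                calc (∑ i ∈ univ.filter (fun i => ¬ (c i = 0)), ∑ α : F,
                      if x i - α * c i ≠ 0 then 1 else 0)
                    = ∑ _i ∈ univ.filter (fun i => ¬ (c i = 0)), (q - 1) :=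
                      Finset.sum_congr rfl hconst
                  _ = (q - 1) * w' := by
                      rw [Finset.sum_const, smul_eq_mul]
                      have hcw2 : #(univ.filter (fun i => ¬ (c i = 0))) = w' := hcw
                      rw [hcw2, mul_comm]
              · -- coordinates outside the support of c
                have hconst : ∀ i ∈ univ.filter (fun i => c i = 0),
                    (∑ α : F, if x i - α * c i ≠ 0 then 1 else 0)
                      = q * (if x i ≠ 0 then 1 else 0) := by
                  intro i hi
                  simp only [mem_filter, mem_univ, true_and] at hi
                  simp [hi, Finset.sum_const, Finset.card_univ, mul_comm]; rfl
                calc (∑ i ∈ univ.filter (fun i => c i = 0), ∑ α : F,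
                      if x i - α * c i ≠ 0 then 1 else 0)
                    = ∑ i ∈ univ.filter (fun i => c i = 0), q * (if x i ≠ 0 then 1 else 0) :=
                      Finset.sum_congr rfl hconst
                  _ = q * hammingNorm (π x) := by
                      rw [← Finset.mul_sum]
                      congr 1
                      rw [hnπ, Finset.card_filter, Finset.sum_filter]
                      refine Finset.sum_congr rfl fun i _ => ?_
                      by_cases hci : c i = 0 <;> simp [hci]
      -- conclude
      have key : w' ≤ q * hammingNorm (π x) := by
        rw [step3] at step2
        have hqe : q * w' = (q - 1) * w' + w' := by
          have : q - 1 + 1 = q := Nat.sub_add_cancel hq.le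
          calc q * w' = (q - 1 + 1) * w' := by rw [this]
          _ = (q - 1) * w' + w' := by ring
        rw [hqe] at step2
        omega
      have : (d' : ℤ) ≤ (hammingNorm (π x) : ℤ) := by
        rw [hd'cast, Int.ceil_le, div_le_iff₀ hq0]
        have : (w' : ℚ) ≤ (hammingNorm (π x) : ℚ) * q := by
          rw [mul_comm]
          exact_mod_cast key
        exact this
      exact_mod_cast this
    -- apply induction hypothesis
    have IH := griesmer_aux j ι' (inferInstance) (inferInstance) d' D' hrank' hdist
    rw [show ((Fintype.card F : ℚ)) = ((q : ℕ) : ℚ) from rfl] at IH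
    -- assemble
    have hstep : ∀ i : ℕ, ⌈(w' : ℚ) / (q : ℚ) ^ (i+1)⌉ = ⌈(d' : ℚ) / (q : ℚ) ^ i⌉ := by
      intro i
      have h1 : (w' : ℚ) / (q : ℚ) ^ (i+1) = ((w' : ℚ) / q) / (q : ℚ) ^ i := by
        rw [div_div, ← pow_succ']
      have h2 : (d' : ℚ) = (⌈(w' : ℚ) / (q : ℚ)⌉ : ℚ) := by
        rw [← hd'cast]; push_cast; ring
      have hqi : 0 < q ^ i := Nat.pow_pos (by omega)
      have h3 := ceil_cast_div_nat ((w' : ℚ) / (q : ℚ)) (q ^ i) hqi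
      rw [h1, h2, show ((q:ℚ))^i = ((q^i : ℕ) : ℚ) by push_cast; ring]
      exact h3.symm
    calc ∑ i ∈ Finset.range (j+1), ⌈(w' : ℚ) / (q : ℚ) ^ i⌉
        = (∑ i ∈ Finset.range j, ⌈(w' : ℚ) / (q : ℚ) ^ (i+1)⌉) + ⌈(w' : ℚ) / (q : ℚ) ^ 0⌉ :=
          Finset.sum_range_succ' _ j
      _ = (∑ i ∈ Finset.range j, ⌈(d' : ℚ) / (q : ℚ) ^ i⌉) + w' := by
          rw [Finset.sum_congr rfl fun i _ => hstep i]
          congr 1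
          rw [pow_zero, div_one]
          exact_mod_cast Int.ceil_intCast (w' : ℤ)
      _ ≤ (Fintype.card ι' : ℤ) + w' := by omega
      _ = (Fintype.card ι : ℤ) := by omega

/-- If `C` is a linear code over `F_q` with minimum distance `d` and `D` is any
`j`-dimensional subcode of `C` (`1 ≤ j ≤ k`), then
`|Support(D)| ≥ ∑_{i=0}^{j-1} ⌈d/q^i⌉`; consequently the `j`-th generalised Hamming
weight satisfies `d_j(C) ≥ ∑_{i=0}^{j-1} ⌈d/q^i⌉`. -/
theorem support_subcode_ge_griesmer_sum
    {F : Type*} [Field F] [Fintype F] [DecidableEq F] {n k j d : ℕ}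
    (C : Submodule F (Fin n → F))
    (hk : Module.finrank F C = k)
    (hd : ∀ c ∈ C, c ≠ 0 → d ≤ hammingNorm c)
    (hd' : ∃ c ∈ C, c ≠ 0 ∧ hammingNorm c = d)
    (hj1 : 1 ≤ j) (hjk : j ≤ k) :
    (∀ D : Submodule F (Fin n → F), D ≤ C → Module.finrank F D = j →
      (∑ i ∈ Finset.range j, ⌈(d : ℚ) / (Fintype.card F : ℚ) ^ i⌉) ≤
        (Nat.card {i : Fin n // ∃ c ∈ D, c i ≠ 0} : ℤ)) ∧
    (∑ i ∈ Finset.range j, ⌈(d : ℚ) / (Fintype.card F : ℚ) ^ i⌉) ≤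
      ((sInf {w : ℕ | ∃ D : Submodule F (Fin n → F), D ≤ C ∧ Module.finrank F D = j ∧
        w = Nat.card {i : Fin n // ∃ c ∈ D, c i ≠ 0}} : ℕ) : ℤ) := by
  classical
  have main : ∀ D : Submodule F (Fin n → F), D ≤ C → Module.finrank F D = j →
      (∑ i ∈ Finset.range j, ⌈(d : ℚ) / (Fintype.card F : ℚ) ^ i⌉) ≤
        (Nat.card {i : Fin n // ∃ c ∈ D, c i ≠ 0} : ℤ) := by
    intro D hDC hDj
    set S := {i : Fin n // ∃ c ∈ D, c i ≠ 0} with hSdef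
    set ρ : (Fin n → F) →ₗ[F] (S → F) := LinearMap.funLeft F F (fun i : S => (i : Fin n))
      with hρdef
    have hker0 : ∀ x ∈ D, ρ x = 0 → x = 0 := by
      intro x hx h0
      funext i
      by_cases hi : ∃ c ∈ D, c i ≠ 0
      · exact congrFun h0 ⟨i, hi⟩
      · by_contra hxi
        exact hi ⟨x, hx, hxi⟩
    have hrk : Module.finrank F ↥(D.map ρ) = j := by
      have hrn := LinearMap.finrank_range_add_finrank_ker (ρ.domRestrict D)
      rw [LinearMap.range_domRestrict] at hrn
      have hkb : LinearMap.ker (ρ.domRestrict D) = ⊥ := by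
        rw [Submodule.eq_bot_iff]
        intro z hz
        exact Subtype.ext (hker0 z.1 z.2 hz)
      rw [hkb, finrank_bot] at hrn
      omega
    have hnorm : ∀ x ∈ D, hammingNorm (ρ x) = hammingNorm x := by
      intro x hx
      refine Finset.card_bij (fun i' _ => i'.1) ?_ ?_ ?_
      · intro i' hi'
        simp only [Finset.mem_filter, Finset.mem_univ, true_and] at hi' ⊢
        exact hi'
      · intro a _ b _ hab
        exact Subtype.ext hab
      · intro i hi
        simp only [Finset.mem_filter, Finset.mem_univ, true_and] at hi
        exact ⟨⟨i, ⟨x, hx, hi⟩⟩, Finset.mem_filter.mpr ⟨Finset.mem_univ _, hi⟩, rfl⟩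
    have hmin2 : ∀ y ∈ D.map ρ, y ≠ 0 → d ≤ hammingNorm y := by
      intro y hy hy0
      obtain ⟨x, hx, rfl⟩ := Submodule.mem_map.mp hy
      have hx0 : x ≠ 0 := by
        rintro rfl
        simp at hy0
      rw [hnorm x hx]
      exact hd x (hDC hx) hx0
    have h := griesmer_aux j S inferInstance inferInstance d (D.map ρ)
      (le_of_eq hrk.symm) hmin2
    rw [Nat.card_eq_fintype_card]
    exact h
  refine ⟨main, ?_⟩
  have hW : {w : ℕ | ∃ D : Submodule F (Fin n → F), D ≤ C ∧ Module.finrank F D = j ∧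
      w = Nat.card {i : Fin n // ∃ c ∈ D, c i ≠ 0}}.Nonempty := by
    have hj' : j ≤ Module.finrank F ↥C := by rw [hk]; exact hjk
    obtain ⟨f, hf⟩ := exists_linearIndependent_of_le_finrank hj'
    refine ⟨_, (Submodule.span F (Set.range f)).map C.subtype,
      Submodule.map_subtype_le _ _, ?_, rfl⟩
    rw [Submodule.finrank_map_subtype_eq, finrank_span_eq_card hf, Fintype.card_fin]
  obtain ⟨D, hDC, hDj, hEq⟩ := Nat.sInf_mem hW
  rw [hEq]
  exact main D hDC hDj
end

section
/- The generalised Hamming weights of a linear code are strictly increasing: for a linear [n,k,d]_q code C and 1 ≤ j < k, d_j(C) < d_{j+1}(C). -/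
/-- The generalised Hamming weights of a linear `[n,k,d]_q` code are strictly
increasing: for `1 ≤ j < k`, `d_j(C) < d_{j+1}(C)`. -/
theorem generalised_hamming_weights_strict_mono
    {F : Type*} [Field F] [Fintype F] [DecidableEq F] {n k j d : ℕ}
    (C : Submodule F (Fin n → F))
    (hk : Module.finrank F C = k)
    (hd : ∀ c ∈ C, c ≠ 0 → d ≤ hammingNorm c)
    (hd' : ∃ c ∈ C, c ≠ 0 ∧ hammingNorm c = d)
    (hj1 : 1 ≤ j) (hjk : j < k) :
    sInf {w : ℕ | ∃ D : Submodule F (Fin n → F), D ≤ C ∧ Module.finrank F D = j ∧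
        w = Nat.card {i : Fin n // ∃ c ∈ D, c i ≠ 0}} <
    sInf {w : ℕ | ∃ D : Submodule F (Fin n → F), D ≤ C ∧ Module.finrank F D = j + 1 ∧
        w = Nat.card {i : Fin n // ∃ c ∈ D, c i ≠ 0}} := by
  classical
  set S1 := {w : ℕ | ∃ D : Submodule F (Fin n → F), D ≤ C ∧ Module.finrank F D = j ∧
      w = Nat.card {i : Fin n // ∃ c ∈ D, c i ≠ 0}} with hS1
  set S2 := {w : ℕ | ∃ D : Submodule F (Fin n → F), D ≤ C ∧ Module.finrank F D = j + 1 ∧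
      w = Nat.card {i : Fin n // ∃ c ∈ D, c i ≠ 0}} with hS2
  -- S2 is nonempty: span of j+1 basis vectors of C
  have hle : j + 1 ≤ Module.finrank F C := by omega
  have hS2ne : S2.Nonempty := by
    let b := Module.finBasis F C
    let v : Fin (j + 1) → (Fin n → F) := fun i => (b (Fin.castLE hle i) : Fin n → F)
    have hli : LinearIndependent F v := by
      have h1 : LinearIndependent F fun i : Fin (j + 1) => b (Fin.castLE hle i) :=
        b.linearIndependent.comp _ (Fin.castLE_injective hle)
      exact h1.map' C.subtype C.ker_subtype
    refine ⟨Nat.card {i : Fin n // ∃ c ∈ Submodule.span F (Set.range v), c i ≠ 0},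
      Submodule.span F (Set.range v), ?_, ?_, rfl⟩
    · rw [Submodule.span_le]
      rintro _ ⟨i, rfl⟩
      exact (b (Fin.castLE hle i)).2
    · rw [finrank_span_eq_card hli, Fintype.card_fin]
  have hmem : sInf S2 ∈ S2 := Nat.sInf_mem hS2ne
  obtain ⟨D, hDC, hDr, hw⟩ := hmem
  -- support of D is nonempty
  have hDne : ∃ i₀ : Fin n, ∃ c ∈ D, c i₀ ≠ 0 := by
    have : D ≠ ⊥ := by
      intro h
      rw [h, finrank_bot] at hDr
      omega
    obtain ⟨c, hcD, hc0⟩ := Submodule.exists_mem_ne_zero_of_ne_bot this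
    obtain ⟨i₀, hi₀⟩ := Function.ne_iff.mp hc0
    exact ⟨i₀, c, hcD, hi₀⟩
  obtain ⟨i₀, c₀, hc₀D, hc₀i⟩ := hDne
  -- evaluation at i₀ on D
  set φ : D →ₗ[F] F := (LinearMap.proj i₀).comp D.subtype with hφdef
  have hφr : LinearMap.range φ = ⊤ := by
    rcases eq_bot_or_eq_top (LinearMap.range φ) with h | h
    · exfalso
      apply hc₀i
      have : φ ⟨c₀, hc₀D⟩ ∈ LinearMap.range φ := LinearMap.mem_range_self _ _
      rw [h, Submodule.mem_bot] at this
      exact this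
    · exact h
  have hker : Module.finrank F (LinearMap.ker φ) = j := by
    have := LinearMap.finrank_range_add_finrank_ker φ
    rw [hφr, hDr] at this
    have h1 : Module.finrank F (⊤ : Submodule F F) = 1 := by
      rw [finrank_top F F, Module.finrank_self]
    rw [h1, Nat.add_comm j 1] at this
    exact Nat.add_left_cancel this
  -- the pushed-forward kernel
  set D' : Submodule F (Fin n → F) := (LinearMap.ker φ).map D.subtype with hD'
  have hD'C : D' ≤ C := le_trans (Submodule.map_subtype_le D _) hDC
  have hD'r : Module.finrank F D' = j := by
    rw [hD', Submodule.finrank_map_subtype_eq]; exact hker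
  have hD'D : ∀ c ∈ D', c ∈ D ∧ c i₀ = 0 := by
    rintro c ⟨⟨x, hx⟩, hxker, rfl⟩
    exact ⟨hx, hxker⟩
  -- supports as sets
  set A : Set (Fin n) := {i | ∃ c ∈ D, c i ≠ 0} with hA
  set A' : Set (Fin n) := {i | ∃ c ∈ D', c i ≠ 0} with hA'
  have hsub : A' ⊂ A := by
    constructor
    · rintro i ⟨c, hc, hci⟩
      exact ⟨c, (hD'D c hc).1, hci⟩
    · intro h
      have hi₀A : i₀ ∈ A := ⟨c₀, hc₀D, hc₀i⟩
      obtain ⟨c, hc, hci⟩ := h hi₀A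
      exact hci (hD'D c hc).2
  have hcard : Nat.card {i : Fin n // ∃ c ∈ D', c i ≠ 0} <
      Nat.card {i : Fin n // ∃ c ∈ D, c i ≠ 0} := by
    have h1 : Nat.card {i : Fin n // ∃ c ∈ D', c i ≠ 0} = A'.ncard := Nat.card_coe_set_eq A'
    have h2 : Nat.card {i : Fin n // ∃ c ∈ D, c i ≠ 0} = A.ncard := Nat.card_coe_set_eq A
    rw [h1, h2]
    exact Set.ncard_lt_ncard hsub (Set.toFinite A)
  calc sInf S1 ≤ Nat.card {i : Fin n // ∃ c ∈ D', c i ≠ 0} :=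
        Nat.sInf_le ⟨D', hD'C, hD'r, rfl⟩
    _ < Nat.card {i : Fin n // ∃ c ∈ D, c i ≠ 0} := hcard
    _ = sInf S2 := hw.symm
end

section
/- Let C be a linear [n,k,d]_q code with generator matrix G having columns x_1,...,x_n ∈ F_q^k, let A_1,...,A_h be a partial semifield of k×k matrices over F_q (every nontrivial linear combination is invertible), and let e_1,...,e_h be a basis of F_{q^h} over F_q. Define G_add to be the k×n matrix over F_{q^h} whose i-th column is ∑_{j=1}^h (A_j x_i) e_j interpreted entrywise (i.e., entry r of column i is ∑_j (A_j x_i)_r e_j). Then the F_q-span of the rows of G_add is an additive code over F_{q^h} of size q^k whose minimum Hamming distance is at least the h-th generalised Hamming weight d_h(C) of C. -/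
open Matrix

/-- Partial semifield construction: from a linear `[n,k,d]_q` code `C` with generator
matrix `G` (columns `x_i`), a partial semifield `A_1, …, A_h` and a basis `e_1, …, e_h`
of `F_{q^h}` over `F_q`, the `F_q`-span of the rows of the matrix `G_add`, whose `i`-th
column has `r`-th entry `∑_j (A_j x_i)_r • e_j`, is an additive code of size `q^k` whose
minimum Hamming distance is at least the `h`-th generalised Hamming weight `d_h(C)`. -/
theorem partial_semifield_construction
    {F K : Type*} [Field F] [Fintype F] [DecidableEq F] [Field K] [Algebra F K]
    [DecidableEq K] {n k h d : ℕ} (hhk : h ≤ k)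
    (e : Module.Basis (Fin h) F K)
    (G : Matrix (Fin k) (Fin n) F)
    (C : Submodule F (Fin n → F))
    (hC : C = LinearMap.range (Matrix.vecMulLinear G))
    (hk : Module.finrank F C = k)
    (hd : ∀ c ∈ C, c ≠ 0 → d ≤ hammingNorm c)
    (hd' : ∃ c ∈ C, c ≠ 0 ∧ hammingNorm c = d)
    (A : Fin h → Matrix (Fin k) (Fin k) F)
    (hA : ∀ lam : Fin h → F, lam ≠ 0 → IsUnit (∑ j, lam j • A j)) :
    Nat.card (Submodule.span F (Set.range fun r : Fin k =>
        (fun i : Fin n => ∑ j, ((A j) *ᵥ (fun r' => G r' i)) r • e j))) =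
      Fintype.card F ^ k ∧
    ∀ c ∈ Submodule.span F (Set.range fun r : Fin k =>
        (fun i : Fin n => ∑ j, ((A j) *ᵥ (fun r' => G r' i)) r • e j)),
      c ≠ 0 →
        sInf {w : ℕ | ∃ D : Submodule F (Fin n → F), D ≤ C ∧ Module.finrank F D = h ∧
          w = Nat.card {i : Fin n // ∃ u ∈ D, u i ≠ 0}} ≤ hammingNorm c := by
  classical
  set rows : Fin k → (Fin n → K) := fun r : Fin k =>
      (fun i : Fin n => ∑ j, ((A j) *ᵥ (fun r' => G r' i)) r • e j) with hrowsdef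
  -- h is positive since K is nontrivial
  have hpos : 0 < h := by
    rcases Nat.eq_zero_or_pos h with h0 | h0
    · exfalso
      subst h0
      haveI : Subsingleton K := e.repr.toEquiv.subsingleton
      exact one_ne_zero (Subsingleton.elim (1 : K) 0)
    · exact h0
  -- injectivity of vecMul with G
  have hinj : ∀ v : Fin k → F, v ᵥ* G = 0 → v = 0 := by
    intro v hv
    have hr : Module.finrank F (LinearMap.range (vecMulLinear G)) = k := by
      rw [← hC]; exact hk
    have h1 := (vecMulLinear G : (Fin k → F) →ₗ[F] (Fin n → F)).finrank_range_add_finrank_ker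
    rw [hr, Module.finrank_pi, Fintype.card_fin] at h1
    have hker : Module.finrank F (LinearMap.ker (vecMulLinear G)) = 0 := by omega
    have hbot : LinearMap.ker (vecMulLinear G) = ⊥ := Submodule.finrank_eq_zero.mp hker
    have hv' : v ∈ LinearMap.ker (vecMulLinear G) := by
      simp only [LinearMap.mem_ker, Matrix.vecMulLinear_apply]; exact hv
    rw [hbot] at hv'
    simpa using hv'
  -- semifield cancellation
  have hcancel : ∀ (lam : Fin h → F) (μ : Fin k → F), lam ≠ 0 →
      μ ᵥ* (∑ j, lam j • A j) = 0 → μ = 0 := by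
    intro lam μ hlam h0
    obtain ⟨M, hM⟩ := (hA lam hlam).exists_right_inv
    calc μ = μ ᵥ* (1 : Matrix (Fin k) (Fin k) F) := (vecMul_one μ).symm
      _ = μ ᵥ* (∑ j, lam j • A j) ᵥ* M := by rw [vecMul_vecMul, hM]
      _ = 0 := by rw [h0, zero_vecMul]
  -- linearity of vecMul in the matrix
  have hlin : ∀ (lam : Fin h → F) (μ : Fin k → F),
      (∑ j, lam j • (μ ᵥ* A j)) = μ ᵥ* (∑ j, lam j • A j) := by
    intro lam μ
    funext r'
    simp only [Finset.sum_apply, Pi.smul_apply, smul_eq_mul, vecMul, dotProduct,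
      Matrix.sum_apply, Matrix.smul_apply, Finset.mul_sum]
    rw [Finset.sum_comm]
    exact Finset.sum_congr rfl fun r _ => Finset.sum_congr rfl fun j _ => by ring
  -- the combination formula
  have hcol : ∀ (j : Fin h) (i : Fin n) (r : Fin k),
      ((A j) *ᵥ (fun r' => G r' i)) r = (A j * G) r i := by
    intro j i r
    simp [mulVec, dotProduct, Matrix.mul_apply]
  have hvm : ∀ (μ : Fin k → F) (j : Fin h) (i : Fin n),
      (μ ᵥ* (A j * G)) i = ∑ r, μ r * (A j * G) r i := by
    intro μ j i
    simp [vecMul, dotProduct]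
  have hcombo : ∀ (μ : Fin k → F) (i : Fin n),
      (∑ r, μ r • rows r) i = ∑ j, (μ ᵥ* (A j * G)) i • e j := by
    intro μ i
    have h1 : (∑ r, μ r • rows r) i
        = ∑ r, ∑ j, (μ r * ((A j) *ᵥ (fun r' => G r' i)) r) • e j := by
      simp [hrowsdef, Finset.smul_sum, smul_smul, Finset.sum_apply]
    rw [h1, Finset.sum_comm]
    refine Finset.sum_congr rfl fun j _ => ?_
    rw [← Finset.sum_smul, hvm]
    refine congrArg (· • e j) ?_
    exact Finset.sum_congr rfl fun r _ => by rw [hcol]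
  -- independence criterion
  have hindep : ∀ (μ : Fin k → F), (∀ j, μ ᵥ* (A j * G) = 0) → μ = 0 := by
    intro μ hμ
    have j0 : Fin h := ⟨0, hpos⟩
    have h1 : μ ᵥ* (A j0) = 0 := by
      have h2 := hμ j0
      rw [← vecMul_vecMul] at h2
      exact hinj _ h2
    apply hcancel (Pi.single (M := fun _ => F) j0 1) μ
    · intro hcon
      have := congrFun hcon j0
      simp at this
    · have hs : (∑ j, Pi.single (M := fun _ => F) j0 1 j • A j) = A j0 := by
        have hstep := Finset.sum_eq_single_of_mem (s := Finset.univ)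
          (f := fun j => Pi.single (M := fun _ => F) j0 1 j • A j) j0 (Finset.mem_univ j0)
          (fun b _ hb => by simp [Pi.single_apply, hb])
        rw [hstep]; simp
      rw [hs]; exact h1
  -- rows are linearly independent
  have hrowsind : LinearIndependent F rows := by
    rw [Fintype.linearIndependent_iff]
    intro μ hμ
    have hcoeff : ∀ (j : Fin h) (i : Fin n), (μ ᵥ* (A j * G)) i = 0 := by
      intro j i
      have h0 : ∑ j, (μ ᵥ* (A j * G)) i • e j = 0 := by
        rw [← hcombo μ i, hμ]; rfl
      exact Fintype.linearIndependent_iff.mp e.linearIndependent _ h0 j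
    have hz : μ = 0 := hindep μ (fun j => funext (hcoeff j))
    intro r; rw [hz]; rfl
  constructor
  · -- cardinality
    have hspan := finrank_span_eq_card hrowsind
    rw [Fintype.card_fin] at hspan
    haveI : FiniteDimensional F (Submodule.span F (Set.range rows)) :=
      FiniteDimensional.span_of_finite F (Set.finite_range rows)
    haveI : Finite (Submodule.span F (Set.range rows)) := Module.finite_of_finite F
    haveI := Fintype.ofFinite (Submodule.span F (Set.range rows))
    rw [Nat.card_eq_fintype_card]
    rw [Module.card_eq_pow_finrank (K := F) (V := Submodule.span F (Set.range rows)), hspan]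
  · -- minimum distance
    intro c hc hc0
    obtain ⟨μ, hμ⟩ := (Submodule.mem_span_range_iff_exists_fun F).mp hc
    set w : Fin h → (Fin n → F) := fun j => μ ᵥ* (A j * G) with hwdef
    have hci : ∀ i, c i = ∑ j, w j i • e j := fun i => by
      rw [← hμ]; exact hcombo μ i
    -- w is linearly independent
    have hwkey : ∀ lam : Fin h → F,
        (∑ j, lam j • w j) = (μ ᵥ* (∑ j, lam j • A j)) ᵥ* G := by
      intro lam
      have h1 : ∀ j, w j = (μ ᵥ* A j) ᵥ* G := fun j => (vecMul_vecMul μ (A j) G).symm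
      have h2 : (∑ j, lam j • w j) = ∑ j, (vecMulLinear G) (lam j • (μ ᵥ* A j)) := by
        refine Finset.sum_congr rfl fun j _ => ?_
        rw [_root_.map_smul, Matrix.vecMulLinear_apply, ← h1]
      rw [h2, ← map_sum, hlin, Matrix.vecMulLinear_apply]
    have hwind : LinearIndependent F w := by
      rw [Fintype.linearIndependent_iff]
      intro lam hlam
      by_contra hcon
      push_neg at hcon
      obtain ⟨j, hj⟩ := hcon
      have hlam0 : lam ≠ 0 := fun hz => hj (by rw [hz]; rfl)
      have h2 : μ ᵥ* (∑ j, lam j • A j) = 0 := by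
        apply hinj
        rw [← hwkey]; exact hlam
      have hμ0 : μ = 0 := hcancel lam μ hlam0 h2
      apply hc0
      rw [← hμ]
      simp [hμ0]
    set D := Submodule.span F (Set.range w) with hDdef
    have hDC : D ≤ C := by
      rw [hDdef, Submodule.span_le, hC]
      rintro _ ⟨j, rfl⟩
      exact ⟨μ ᵥ* A j, by rw [Matrix.vecMulLinear_apply, vecMul_vecMul]⟩
    have hDrank : Module.finrank F D = h := by
      rw [hDdef, finrank_span_eq_card hwind, Fintype.card_fin]
    have hsupp : ∀ i : Fin n, (∃ u ∈ D, u i ≠ 0) ↔ c i ≠ 0 := by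
      intro i
      constructor
      · rintro ⟨u, hu, hui⟩ hci0
        have hz : ∀ j, w j i = 0 := by
          intro j
          exact Fintype.linearIndependent_iff.mp e.linearIndependent (fun j => w j i)
            (by rw [← hci i]; exact hci0) j
        obtain ⟨lam, hl⟩ := (Submodule.mem_span_range_iff_exists_fun F).mp hu
        apply hui
        rw [← hl]
        simp [Finset.sum_apply, hz]
      · intro hci0
        by_contra hcon
        push_neg at hcon
        apply hci0
        rw [hci i]
        refine Finset.sum_eq_zero fun j _ => ?_
        rw [hcon (w j) (Submodule.subset_span ⟨j, rfl⟩), zero_smul]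
    have hcard : Nat.card {i : Fin n // ∃ u ∈ D, u i ≠ 0} = hammingNorm c := by
      rw [Nat.card_eq_fintype_card, Fintype.card_subtype]
      unfold hammingNorm
      apply Finset.card_bij (fun i _ => i) <;> simp [hsupp]
    apply Nat.sInf_le
    exact ⟨D, hDC, hDrank, hcard.symm⟩
end

section
/- If there exists a linear [n,k,d]_q code and a partial semifield of h matrices of size k×k over F_q, then there exists an additive code over F_{q^h} of length n, F_q-dimension k, and minimum distance at least ∑_{j=0}^{h-1} ⌈d/q^j⌉. -/
open Matrix

section Helpers
open Finset

lemma my_ceilDiv_ceilDiv (a q m : ℕ) (hq : 0 < q) (hm : 0 < m) :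
    (a ⌈/⌉ q) ⌈/⌉ m = a ⌈/⌉ (q * m) := by
  have hqm : 0 < q * m := Nat.mul_pos hq hm
  apply le_antisymm
  · rw [ceilDiv_le_iff_le_mul hm, ceilDiv_le_iff_le_mul hq, ← mul_assoc]
    rw [← ceilDiv_le_iff_le_mul hqm]
  · rw [ceilDiv_le_iff_le_mul hqm, mul_assoc, ← ceilDiv_le_iff_le_mul hq,
      ← ceilDiv_le_iff_le_mul hm]

lemma my_ceilDiv_mono (a b q : ℕ) (hq : 0 < q) (hab : a ≤ b) : a ⌈/⌉ q ≤ b ⌈/⌉ q := by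
  rw [ceilDiv_le_iff_le_mul hq]
  exact hab.trans (le_smul_ceilDiv hq)

lemma my_cast_ceilDiv (a b : ℕ) (hb : 0 < b) :
    ⌈(a : ℚ) / (b : ℚ)⌉ = ((a ⌈/⌉ b : ℕ) : ℤ) := by
  have hb' : (0 : ℚ) < b := by exact_mod_cast hb
  rw [Int.ceil_eq_iff]
  constructor
  · -- (↑(a ⌈/⌉ b) : ℚ) - 1 < a / b  ↔  b * (c - 1) < a  ↔ b*c < a + b
    rw [sub_lt_iff_lt_add, div_add' _ _ _ (ne_of_gt hb'), lt_div_iff₀ hb']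
    have h1 : b * (a ⌈/⌉ b) ≤ a + b - 1 := by
      rw [Nat.ceilDiv_eq_add_pred_div, mul_comm]
      exact Nat.div_mul_le_self _ _
    have h2 : b * (a ⌈/⌉ b) < a + b := lt_of_le_of_lt h1 (by omega)
    calc ((a ⌈/⌉ b : ℕ) : ℚ) * b = ((b * (a ⌈/⌉ b) : ℕ) : ℚ) := by push_cast; ring
    _ < ((a + b : ℕ) : ℚ) := by exact_mod_cast h2
    _ = (a : ℚ) + 1 * b := by push_cast; ring
  · rw [div_le_iff₀ hb']
    have := le_smul_ceilDiv (b := a) hb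
    calc (a : ℚ) ≤ ((b * (a ⌈/⌉ b) : ℕ) : ℚ) := by exact_mod_cast this
    _ = ((a ⌈/⌉ b : ℕ) : ℚ) * b := by push_cast; ring

lemma my_hammingNorm_eq_card_subtype {ι M : Type*} [Fintype ι] [DecidableEq M] [Zero M]
    (v : ι → M) : hammingNorm v = Fintype.card {i : ι // v i ≠ 0} := by
  rw [Fintype.card_subtype]; rfl

lemma my_hammingNorm_restrict {ι M : Type*} [Fintype ι] [DecidableEq M] [Zero M]
    (p : ι → Prop) [DecidablePred p] (v : ι → M) (hv : ∀ i, v i ≠ 0 → p i) :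
    hammingNorm (fun i : {i // p i} => v i.val) = hammingNorm v := by
  rw [my_hammingNorm_eq_card_subtype, my_hammingNorm_eq_card_subtype]
  exact Fintype.card_congr (Equiv.subtypeSubtypeEquivSubtype fun {x} hx => hv x hx)

-- counting lemma
lemma my_count_lemma {F ι : Type*} [Field F] [Fintype F] [DecidableEq F]
    [Fintype ι] [DecidableEq ι] (w u : ι → F) :
    ∑ lam : F, (Finset.univ.filter fun i => w i ≠ 0 ∧ u i - lam * w i ≠ 0).card
      = hammingNorm w * (Fintype.card F - 1) := by
  have key : ∀ lam : F, (Finset.univ.filter fun i => w i ≠ 0 ∧ u i - lam * w i ≠ 0).card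
      = ∑ i ∈ Finset.univ.filter (fun i => w i ≠ 0), (if u i - lam * w i ≠ 0 then 1 else 0) := by
    intro lam
    rw [← Finset.sum_filter, Finset.filter_filter, Finset.card_eq_sum_ones]
  simp_rw [key]
  rw [Finset.sum_comm]
  rw [show hammingNorm w = (Finset.univ.filter fun i => w i ≠ 0).card from rfl,
    Finset.card_eq_sum_ones (Finset.univ.filter fun i => w i ≠ 0), Finset.sum_mul, one_mul]
  apply Finset.sum_congr rfl
  intro i hi
  have hwi : w i ≠ 0 := (Finset.mem_filter.1 hi).2
  have hpred : ∀ lam : F, (u i - lam * w i ≠ 0) ↔ lam ≠ u i / w i := by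
    intro lam
    rw [sub_ne_zero]
    constructor
    · intro hne heq; apply hne; rw [heq]; field_simp
    · intro hne heq; apply hne; rw [eq_div_iff hwi]; exact heq.symm
  rw [← Finset.sum_filter]
  have : (Finset.univ.filter fun lam : F => u i - lam * w i ≠ 0)
      = Finset.univ.erase (u i / w i) := by
    rw [← Finset.filter_ne']
    exact Finset.filter_congr fun lam _ => by simpa using hpred lam
  rw [Finset.sum_const, smul_eq_mul, mul_one, this,
    Finset.card_erase_of_mem (Finset.mem_univ _), Finset.card_univ]

theorem my_griesmer {F : Type*} [Field F] [Fintype F] [DecidableEq F] (h : ℕ) :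
    ∀ (ι : Type) [Fintype ι] [DecidableEq ι] (d : ℕ)
      (W : Submodule F (ι → F)), Module.finrank F W = h →
      (∀ c ∈ W, c ≠ 0 → d ≤ hammingNorm c) →
      ∑ j ∈ Finset.range h, d ⌈/⌉ (Fintype.card F) ^ j ≤ Fintype.card ι := by
  induction h with
  | zero => intro ι _ _ d W _ _; simp
  | succ h IH =>
    intro ι _ _ d W hrank hdist
    set q := Fintype.card F with hq
    have hq2 : 2 ≤ q := Fintype.one_lt_card
    have hq0 : 0 < q := by omega
    -- a nonzero element of W
    haveI : Nontrivial W := Module.finrank_pos_iff.mp (by rw [hrank]; omega)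
    obtain ⟨w', hw'⟩ := exists_ne (0 : W)
    -- minimal weight element
    set S : Set ℕ := {m | ∃ c, c ∈ W ∧ c ≠ 0 ∧ hammingNorm c = m} with hS
    have hSne : S.Nonempty :=
      ⟨_, w'.val, w'.2, fun hc => hw' (Subtype.ext hc), rfl⟩
    obtain ⟨w, hwW, hw0, hwe⟩ := Nat.sInf_mem hSne
    set e := sInf S with he
    have hmin : ∀ c ∈ W, c ≠ 0 → e ≤ hammingNorm c := fun c hc hc0 =>
      Nat.sInf_le ⟨c, hc, hc0, rfl⟩
    have hde : d ≤ e := hwe ▸ hdist w hwW hw0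
    have he1 : 1 ≤ e := hwe ▸ hammingNorm_pos_iff.2 hw0
    -- the restriction map to the complement of the support of w
    set R : (ι → F) →ₗ[F] ({i : ι // w i = 0} → F) :=
      LinearMap.funLeft F F (Subtype.val) with hR
    have hRw : R w = 0 := funext fun i => i.2
    -- Claim A: elements of W supported in supp(w) are multiples of w
    have hwt : ∀ (u : ι → F) (lam : F), (∀ i : ι, w i = 0 → u i = 0) →
        hammingNorm (u - lam • w)
          = (Finset.univ.filter fun i => w i ≠ 0 ∧ u i - lam * w i ≠ 0).card := by
      intro u lam hu0
      show (Finset.univ.filter fun i => (u - lam • w) i ≠ 0).card = _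
      congr 1
      apply Finset.filter_congr
      intro i _
      simp only [Pi.sub_apply, Pi.smul_apply, smul_eq_mul]
      constructor
      · intro hi
        refine ⟨fun hwi => hi ?_, by simpa using hi⟩
        rw [hwi, mul_zero, sub_zero, hu0 i hwi]
      · intro hi; simpa using hi.2
    have claimA : ∀ u ∈ W, (∀ i : ι, w i = 0 → u i = 0) → ∃ a : F, a • w = u := by
      intro u huW hu0
      by_contra hns
      push_neg at hns
      have hne : ∀ lam : F, u - lam • w ≠ 0 := by
        intro lam hc
        exact hns lam (by rwa [sub_eq_zero, eq_comm] at hc)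
      have hsum := my_count_lemma w u
      rw [hwe] at hsum
      have hle : ∀ lam : F,
          e ≤ (Finset.univ.filter fun i => w i ≠ 0 ∧ u i - lam * w i ≠ 0).card := by
        intro lam
        rw [← hwt u lam hu0]
        exact hmin _ (W.sub_mem huW (W.smul_mem lam hwW)) (hne lam)
      have h1 : q * e ≤ e * (q - 1) := by
        calc q * e = ∑ _lam : F, e := by rw [Finset.sum_const, Finset.card_univ, smul_eq_mul]
        _ ≤ ∑ lam : F, (Finset.univ.filter fun i => w i ≠ 0 ∧ u i - lam * w i ≠ 0).card :=
            Finset.sum_le_sum fun lam _ => hle lam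
        _ = e * (q - 1) := hsum
      have h2 : e * (q - 1) < q * e := by
        rw [mul_comm q e]
        exact mul_lt_mul_of_pos_left (by omega) (by omega)
      omega
    -- kernel of the restriction map
    have hker : LinearMap.ker (R.domRestrict W) = Submodule.span F {(⟨w, hwW⟩ : W)} := by
      ext x
      rw [LinearMap.mem_ker, Submodule.mem_span_singleton]
      constructor
      · intro hx
        have hx0 : ∀ i : ι, w i = 0 → x.val i = 0 := by
          intro i hi
          exact congrFun hx ⟨i, hi⟩
        obtain ⟨a, ha⟩ := claimA x.val x.2 hx0
        exact ⟨a, Subtype.ext ha⟩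
      · rintro ⟨a, rfl⟩
        show R ((a • (⟨w, hwW⟩ : W)).val) = 0
        rw [Submodule.coe_smul, _root_.map_smul, hRw, smul_zero]
    have hkerrank : Module.finrank F (LinearMap.ker (R.domRestrict W)) = 1 := by
      rw [hker]
      exact finrank_span_singleton (fun hc => hw0 (by injection hc))
    have hmaprank : Module.finrank F (W.map R) = h := by
      have h1 := LinearMap.finrank_range_add_finrank_ker (R.domRestrict W)
      rw [LinearMap.range_domRestrict, hkerrank, hrank] at h1
      omega
    -- residual distance
    have hres : ∀ c ∈ W.map R, c ≠ 0 → e ⌈/⌉ q ≤ hammingNorm c := by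
      rintro c hc hc0
      obtain ⟨u, huW, rfl⟩ := Submodule.mem_map.1 hc
      have hsum := my_count_lemma w u
      rw [hwe] at hsum
      set inS : F → ℕ :=
        fun lam => (Finset.univ.filter fun i => w i ≠ 0 ∧ u i - lam * w i ≠ 0).card with hinS
      have hex : ∃ lam₀ : F, q * inS lam₀ ≤ e * (q - 1) := by
        by_contra hcon
        push_neg at hcon
        have h3 : q * (e * (q - 1)) + q ≤ q * (e * (q - 1)) := by
          calc q * (e * (q - 1)) + q = ∑ _lam : F, (e * (q - 1) + 1) := by
                rw [Finset.sum_const, Finset.card_univ, smul_eq_mul]; ring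
          _ ≤ ∑ lam : F, q * inS lam := Finset.sum_le_sum fun lam _ => hcon lam
          _ = q * ∑ lam : F, inS lam := by rw [Finset.mul_sum]
          _ = q * (e * (q - 1)) := by rw [hsum]
        omega
      obtain ⟨lam₀, hlam₀⟩ := hex
      have hune : u - lam₀ • w ≠ 0 := by
        intro hc2
        apply hc0
        rw [sub_eq_zero] at hc2
        rw [hc2, _root_.map_smul, hRw, smul_zero]
      have hesplit : e ≤ inS lam₀ + hammingNorm (R u) := by
        -- weight of u - lam₀ • w splits over supp(w) and its complement
        have hBnorm : hammingNorm (R u)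
            = (Finset.univ.filter fun i => ¬ w i ≠ 0 ∧ u i - lam₀ * w i ≠ 0).card := by
          rw [my_hammingNorm_eq_card_subtype, ← Fintype.card_subtype]
          apply Fintype.card_congr
          refine (Equiv.subtypeEquivRight (q := fun i : {i : ι // w i = 0} => u i.val ≠ 0)
              (fun i => Iff.rfl)).trans
            (((Equiv.subtypeSubtypeEquivSubtypeInter (fun i : ι => w i = 0)
              (fun i => u i ≠ 0)).trans (Equiv.subtypeEquivRight fun i => ?_)))
          constructor
          · rintro ⟨h1, h2⟩
            refine ⟨fun hcc => hcc h1, ?_⟩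
            rw [h1, mul_zero, sub_zero]; exact h2
          · rintro ⟨h1, h2⟩
            rw [not_not] at h1
            refine ⟨h1, ?_⟩
            rwa [h1, mul_zero, sub_zero] at h2
        have hsplit2 : hammingNorm (u - lam₀ • w) ≤ inS lam₀ + hammingNorm (R u) := by
          rw [hBnorm, hinS]
          show (Finset.univ.filter fun i => (u - lam₀ • w) i ≠ 0).card ≤ _
          have h0 : (Finset.univ.filter fun i => (u - lam₀ • w) i ≠ 0)
              = Finset.univ.filter fun i => u i - lam₀ * w i ≠ 0 :=
            Finset.filter_congr fun i _ => by
              simp [Pi.sub_apply, Pi.smul_apply, smul_eq_mul]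
          rw [h0, ← Finset.card_filter_add_card_filter_not
            (s := Finset.univ.filter fun i => u i - lam₀ * w i ≠ 0) (fun i => w i ≠ 0)]
          apply Nat.add_le_add
          · apply le_of_eq
            rw [Finset.filter_comm, Finset.filter_filter]
          · apply le_of_eq
            rw [Finset.filter_comm, Finset.filter_filter]
        exact le_trans (hmin _ (W.sub_mem huW (W.smul_mem lam₀ hwW)) hune) hsplit2
      rw [ceilDiv_le_iff_le_mul hq0]
      set b := hammingNorm (R u) with hb
      obtain ⟨q', hq'⟩ : ∃ q', q = q' + 1 := ⟨q - 1, by omega⟩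
      rw [hq'] at hlam₀ ⊢
      have h5 : (q' + 1) * e ≤ e * q' + (q' + 1) * b := by
        calc (q' + 1) * e ≤ (q' + 1) * inS lam₀ + (q' + 1) * b := by
              rw [← mul_add]; exact Nat.mul_le_mul_left _ hesplit
        _ ≤ e * (q' + 1 - 1) + (q' + 1) * b := Nat.add_le_add_right hlam₀ _
        _ = e * q' + (q' + 1) * b := by norm_num
      have h6 : q' * e + e ≤ q' * e + (q' + 1) * b := by
        calc q' * e + e = (q' + 1) * e := by ring
        _ ≤ e * q' + (q' + 1) * b := h5
        _ = q' * e + (q' + 1) * b := by ring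
      exact Nat.le_of_add_le_add_left h6
    -- apply the induction hypothesis to the residual code
    have hIH := IH {i : ι // w i = 0} (e ⌈/⌉ q) (W.map R) hmaprank hres
    -- cardinality of the complement of supp(w)
    have hcard : Fintype.card {i : ι // w i = 0} + e = Fintype.card ι := by
      rw [Fintype.card_subtype, ← hwe, ← Finset.card_univ (α := ι)]
      have := Finset.card_filter_add_card_filter_not
        (s := (Finset.univ : Finset ι)) (fun i => w i = 0)
      rw [← this]
      rfl
    -- final computation
    calc ∑ j ∈ Finset.range (h + 1), d ⌈/⌉ q ^ j
        ≤ ∑ j ∈ Finset.range (h + 1), e ⌈/⌉ q ^ j :=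
          Finset.sum_le_sum fun j _ => my_ceilDiv_mono _ _ _ (pow_pos hq0 j) hde
      _ = (∑ j ∈ Finset.range h, e ⌈/⌉ q ^ (j + 1)) + e ⌈/⌉ q ^ 0 := Finset.sum_range_succ' _ _
      _ = (∑ j ∈ Finset.range h, (e ⌈/⌉ q) ⌈/⌉ q ^ j) + e := by
          rw [pow_zero, ceilDiv_one]
          congr 1
          apply Finset.sum_congr rfl
          intro j _
          rw [my_ceilDiv_ceilDiv _ _ _ hq0 (pow_pos hq0 j), ← pow_succ']
      _ ≤ Fintype.card {i : ι // w i = 0} + e := Nat.add_le_add_right hIH _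
      _ = Fintype.card ι := hcard

end Helpers

/-- If there is a linear `[n,k,d]_q` code and a partial semifield of `h` matrices of size
`k × k` over `F_q`, then there is an additive code over `F_{q^h}` of length `n`,
`F_q`-dimension `k`, and minimum distance at least `∑_{j=0}^{h-1} ⌈d/q^j⌉`. -/
theorem additive_code_of_linear_code_and_partial_semifield
    {F K : Type*} [Field F] [Fintype F] [DecidableEq F] [Field K] [Algebra F K]
    [DecidableEq K] {n k h d : ℕ} (hhk : h ≤ k)
    (hK : Module.finrank F K = h)
    (hlin : ∃ C : Submodule F (Fin n → F), Module.finrank F C = k ∧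
      (∀ c ∈ C, c ≠ 0 → d ≤ hammingNorm c) ∧ (∃ c ∈ C, c ≠ 0 ∧ hammingNorm c = d))
    (hsemi : ∃ A : Fin h → Matrix (Fin k) (Fin k) F,
      ∀ lam : Fin h → F, lam ≠ 0 → IsUnit (∑ j, lam j • A j)) :
    ∃ Cadd : Submodule F (Fin n → K), Module.finrank F Cadd = k ∧
      ∀ c ∈ Cadd, c ≠ 0 →
        (∑ j ∈ Finset.range h, ⌈(d : ℚ) / (Fintype.card F : ℚ) ^ j⌉) ≤
          (hammingNorm c : ℤ) := by
  obtain ⟨C, hCrank, hCdist, -⟩ := hlin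
  obtain ⟨A, hA⟩ := hsemi
  set q := Fintype.card F with hq
  have hq0 : 0 < q := Fintype.card_pos
  rcases Nat.eq_zero_or_pos h with hzero | hpos
  · -- degenerate case h = 0
    subst hzero
    rcases Nat.eq_zero_or_pos k with hk | hk
    · subst hk
      exact ⟨⊥, finrank_bot F _, fun c hc hc0 => by simp⟩
    · have hkn : k ≤ n := by
        rw [← hCrank]
        have := Submodule.finrank_le C
        rwa [Module.finrank_fin_fun] at this
      have hn : 0 < n := lt_of_lt_of_le hk hkn
      have hKinf : ¬ Module.Finite F K := by
        intro hfin
        have : 0 < Module.finrank F K := Module.finrank_pos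
        omega
      have hrk : (k : Cardinal) ≤ Module.rank F K := by
        have h1 : (Cardinal.aleph0 : Cardinal) ≤ Module.rank F K := by
          by_contra hc
          rw [not_le, Module.rank_lt_aleph0_iff] at hc
          exact hKinf hc
        exact le_trans (Cardinal.nat_lt_aleph0 k).le h1
      obtain ⟨s, hscard, hsli⟩ := le_rank_iff_exists_linearIndependent_finset.1 hrk
      let ψ : K →ₗ[F] (Fin n → K) := LinearMap.single F (fun _ : Fin n => K) ⟨0, hn⟩
      have hψinj : Function.Injective ψ := by
        intro a b hab
        have := congrFun hab ⟨0, hn⟩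
        simpa [ψ, LinearMap.single_apply, Pi.single_eq_same] using this
      refine ⟨(Submodule.span F (s : Set K)).map ψ, ?_, fun c hc hc0 => by simp⟩
      rw [← LinearEquiv.finrank_eq
        (Submodule.equivMapOfInjective ψ hψinj (Submodule.span F (s : Set K)))]
      rw [finrank_span_finset_eq_card hsli, hscard]
  · -- main case 1 ≤ h
    haveI : Module.Finite F K := FiniteDimensional.of_finrank_pos (by omega)
    let b : Module.Basis (Fin h) F K := Module.finBasisOfFinrankEq F K hK
    let bc : Module.Basis (Fin k) F C := Module.finBasisOfFinrankEq F C hCrank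
    let G : (Fin k → F) →ₗ[F] (Fin n → F) := C.subtype ∘ₗ (bc.equivFun.symm : _ ≃ₗ[F] _)
    have hGmem : ∀ y, G y ∈ C := fun y => (bc.equivFun.symm y).2
    have hGinj : Function.Injective G :=
      Subtype.coe_injective.comp bc.equivFun.symm.injective
    -- invertible matrices act injectively
    have hMinj : ∀ M : Matrix (Fin k) (Fin k) F, IsUnit M →
        ∀ x : Fin k → F, M.mulVec x = 0 → x = 0 := by
      intro M hM x hx
      obtain ⟨u, rfl⟩ := hM
      have h1 : ((↑u⁻¹ : Matrix (Fin k) (Fin k) F) * (↑u : Matrix (Fin k) (Fin k) F)) = 1 := u.inv_mul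
      calc x = (1 : Matrix (Fin k) (Fin k) F).mulVec x := (Matrix.one_mulVec x).symm
      _ = ((↑u⁻¹ : Matrix (Fin k) (Fin k) F) * (↑u : Matrix (Fin k) (Fin k) F)).mulVec x := by rw [h1]
      _ = (↑u⁻¹ : Matrix (Fin k) (Fin k) F).mulVec ((↑u : Matrix (Fin k) (Fin k) F).mulVec x) :=
          (Matrix.mulVec_mulVec _ _ _).symm
      _ = 0 := by rw [hx, Matrix.mulVec_zero]
    have hcombo : ∀ (lam : Fin h → F) (x : Fin k → F),
        (∑ j, lam j • A j).mulVec x = ∑ j, lam j • (A j).mulVec x := by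
      intro lam x
      let ev : Matrix (Fin k) (Fin k) F →ₗ[F] (Fin k → F) :=
        { toFun := fun M => M.mulVec x
          map_add' := fun M N => Matrix.add_mulVec M N x
          map_smul' := fun a M => Matrix.smul_mulVec a M x }
      show ev (∑ j, lam j • A j) = _
      rw [map_sum]
      exact Finset.sum_congr rfl fun j _ => ev.map_smul _ _
    have hA0 : IsUnit (A ⟨0, hpos⟩) := by
      have hne : (Pi.single ⟨0, hpos⟩ 1 : Fin h → F) ≠ 0 := by
        intro hc
        have := congrFun hc ⟨0, hpos⟩
        simp at this
      have := hA _ hne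
      rwa [show (∑ j, (Pi.single ⟨0, hpos⟩ 1 : Fin h → F) j • A j) = A ⟨0, hpos⟩ by
        rw [Finset.sum_eq_single ⟨0, hpos⟩]
        · simp
        · intro j _ hj; rw [Pi.single_eq_of_ne hj, zero_smul]
        · simp] at this
    -- the additive code
    let Ψ : Fin h → ((Fin n → F) →ₗ[F] (Fin n → K)) := fun j =>
      LinearMap.pi fun i => (LinearMap.toSpanSingleton F K (b j)).comp (LinearMap.proj i)
    let Φ : (Fin k → F) →ₗ[F] (Fin n → K) :=
      ∑ j, (Ψ j) ∘ₗ G ∘ₗ Matrix.mulVecLin (A j)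
    have hΦ : ∀ x i, Φ x i = ∑ j, G ((A j).mulVec x) i • b j := by
      intro x i
      simp [Φ, Ψ, LinearMap.sum_apply, Finset.sum_apply, LinearMap.pi_apply,
        LinearMap.toSpanSingleton_apply, Matrix.mulVecLin_apply]
    have hzeroiff : ∀ x (i : Fin n), Φ x i = 0 ↔ ∀ j, G ((A j).mulVec x) i = 0 := by
      intro x i
      rw [hΦ]
      constructor
      · intro hs
        exact Fintype.linearIndependent_iff.1 b.linearIndependent _ hs
      · intro hj
        simp [hj]
    have hΦinj : Function.Injective Φ := by
      rw [← LinearMap.ker_eq_bot]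
      apply LinearMap.ker_eq_bot'.2
      intro x hx
      have hall : ∀ j (i : Fin n), G ((A j).mulVec x) i = 0 := by
        intro j i
        exact (hzeroiff x i).1 (congrFun hx i) j
      have hG0 : G ((A ⟨0, hpos⟩).mulVec x) = 0 := funext fun i => hall _ i
      have : (A ⟨0, hpos⟩).mulVec x = 0 := hGinj (by rw [hG0, map_zero])
      exact hMinj _ hA0 x this
    refine ⟨LinearMap.range Φ, ?_, ?_⟩
    · rw [LinearMap.finrank_range_of_inj hΦinj, Module.finrank_fin_fun]
    · rintro c ⟨x, rfl⟩ hc0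
      have hx0 : x ≠ 0 := by rintro rfl; exact hc0 (map_zero Φ)
      -- the h-dimensional subcode supported on the support of Φ x
      set p : Fin n → Prop := fun i => Φ x i ≠ 0 with hp
      let L : (Fin h → F) →ₗ[F] (Fin k → F) :=
        ∑ j, (LinearMap.toSpanSingleton F (Fin k → F) ((A j).mulVec x)).comp (LinearMap.proj j)
      have hL : ∀ lam, L lam = (∑ j, lam j • A j).mulVec x := by
        intro lam
        rw [hcombo]
        simp [L, LinearMap.sum_apply, LinearMap.toSpanSingleton_apply]
      let E : (Fin h → F) →ₗ[F] ({i : Fin n // p i} → F) :=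
        (LinearMap.funLeft F F Subtype.val) ∘ₗ G ∘ₗ L
      have hE : ∀ lam i, E lam i = G ((∑ j, lam j • A j).mulVec x) i.val := by
        intro lam i
        simp [E, hL, LinearMap.funLeft_apply]
      -- vanishing off the support of Φ x
      have hvanish : ∀ (lam : Fin h → F) (i : Fin n), Φ x i = 0 →
          G ((∑ j, lam j • A j).mulVec x) i = 0 := by
        intro lam i hi
        have hj := (hzeroiff x i).1 hi
        rw [hcombo, map_sum]
        rw [Finset.sum_apply]
        apply Finset.sum_eq_zero
        intro j _
        rw [_root_.map_smul, Pi.smul_apply, hj j, smul_zero]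
      have hnormeq : ∀ lam : Fin h → F,
          hammingNorm (E lam) = hammingNorm (G ((∑ j, lam j • A j).mulVec x)) := by
        intro lam
        have := my_hammingNorm_restrict p (G ((∑ j, lam j • A j).mulVec x))
          (fun i hi => by
            by_contra hpi
            exact hi (hvanish lam i hpi))
        rw [← this]
        congr 1
        funext i
        rw [hE]
      have hEinj : Function.Injective E := by
        rw [← LinearMap.ker_eq_bot]
        apply LinearMap.ker_eq_bot'.2
        intro lam hlam
        by_contra hlam0
        have hunit := hA lam hlam0
        have hv : ∀ i : Fin n, G ((∑ j, lam j • A j).mulVec x) i = 0 := by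
          intro i
          by_cases hpi : p i
          · exact (hE lam ⟨i, hpi⟩) ▸ congrFun hlam ⟨i, hpi⟩
          · rw [hp, not_not] at hpi
            exact hvanish lam i hpi
        have : (∑ j, lam j • A j).mulVec x = 0 := by
          apply hGinj
          rw [map_zero]
          exact funext hv
        exact hx0 (hMinj _ hunit x this)
      have hWrank : Module.finrank F (LinearMap.range E) = h := by
        rw [LinearMap.finrank_range_of_inj hEinj, Module.finrank_fin_fun]
      have hWdist : ∀ c' ∈ LinearMap.range E, c' ≠ 0 → d ≤ hammingNorm c' := by
        rintro c' ⟨lam, rfl⟩ hc'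
        have hlam0 : lam ≠ 0 := by rintro rfl; exact hc' (map_zero E)
        have hunit := hA lam hlam0
        have hv0 : G ((∑ j, lam j • A j).mulVec x) ≠ 0 := by
          intro hcc
          have : (∑ j, lam j • A j).mulVec x = 0 := hGinj (by rw [hcc, map_zero])
          exact hx0 (hMinj _ hunit x this)
        have := hCdist _ (hGmem ((∑ j, lam j • A j).mulVec x)) hv0
        rw [hnormeq lam]
        exact this
      have hgries := my_griesmer h {i : Fin n // p i} d (LinearMap.range E) hWrank hWdist
      have hcard : Fintype.card {i : Fin n // p i} = hammingNorm (Φ x) :=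
        (my_hammingNorm_eq_card_subtype (Φ x)).symm
      rw [hcard] at hgries
      calc ∑ j ∈ Finset.range h, ⌈(d : ℚ) / (q : ℚ) ^ j⌉
          = ∑ j ∈ Finset.range h, ((d ⌈/⌉ q ^ j : ℕ) : ℤ) := by
            apply Finset.sum_congr rfl
            intro j _
            rw [← my_cast_ceilDiv d (q ^ j) (pow_pos hq0 j)]
            norm_num
      _ = ((∑ j ∈ Finset.range h, d ⌈/⌉ q ^ j : ℕ) : ℤ) := by push_cast; ring
      _ ≤ (hammingNorm (Φ x) : ℤ) := by exact_mod_cast hgries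
end

section
/- Let q be a prime power, s ≥ 1, h ≤ s, and let λ_1,...,λ_h be nonzero elements of F_{q^s} whose F_q-affine span is an (h−1)-dimensional affine subspace of F_{q^s} (viewed as F_q-vector space) not containing 0. Then the h×h matrix Λ with entries Λ_{ij} = λ_j^{q^{s−1−i}} for i ∈ {0,...,h−1}, j ∈ {1,...,h}, is nonsingular. -/
open Polynomial Module

/-- If `λ_1, …, λ_h` are nonzero elements of `F_{q^s}` whose `F_q`-affine span is an
`(h-1)`-dimensional affine subspace not containing `0`, then the Moore-type matrix
`Λ = (λ_j^{q^{s-1-i}})` is nonsingular. -/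
theorem moore_matrix_nonsingular
    {F E : Type*} [Field F] [Fintype F] [Field E] [Algebra F E]
    {s h : ℕ} (hs : 1 ≤ s) (hhs : h ≤ s)
    (hE : Module.finrank F E = s)
    (lam : Fin h → E) (hlam : ∀ j, lam j ≠ 0)
    (hdim : Module.finrank F (affineSpan F (Set.range lam)).direction = h - 1)
    (h0 : (0 : E) ∉ affineSpan F (Set.range lam)) :
    (Matrix.of fun i j : Fin h =>
        lam j ^ Fintype.card F ^ (s - 1 - (i : ℕ))).det ≠ 0 := by
  classical
  rcases Nat.eq_zero_or_pos h with rfl | hpos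
  · rw [Matrix.det_fin_zero]; exact one_ne_zero
  set q := Fintype.card F with hq
  have hq1 : 1 < q := Fintype.one_lt_card
  have hfd : FiniteDimensional F E := FiniteDimensional.of_finrank_pos (by rw [hE]; omega)
  have hfinE : Finite E := Module.finite_of_finite F
  haveI : Fintype E := Fintype.ofFinite E
  -- characteristic
  set p := ringChar F with hp
  haveI hpF : CharP F p := ringChar.charP F
  haveI hpprime : Fact p.Prime := ⟨CharP.char_is_prime F p⟩
  haveI hpE : CharP E p := charP_of_injective_algebraMap (algebraMap F E).injective p
  haveI : ExpChar E p := ExpChar.prime hpprime.out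
  obtain ⟨k, -, hk⟩ : ∃ n : ℕ+, Nat.Prime p ∧ q = p ^ (n : ℕ) := FiniteField.card F p
  intro hdet
  obtain ⟨α, hα0, hαrel⟩ := Matrix.exists_vecMul_eq_zero_iff.mpr hdet
  have hαrel' : ∀ j : Fin h, ∑ i : Fin h, α i * lam j ^ q ^ (s - 1 - (i : ℕ)) = 0 := by
    intro j
    have := congrFun hαrel j
    simpa [Matrix.vecMul, dotProduct] using this
  set m := s - h with hm
  -- inverse Frobenius images of the coefficients
  have hΦbij : Function.Bijective (iterateFrobenius E p (k * m)) :=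
    Finite.injective_iff_bijective.mp (iterateFrobenius E p (k * m)).injective
  choose β hβ using fun i => hΦbij.surjective (α i)
  have hfro : ∀ (e : ℕ) (x : E), x ^ q ^ e = iterateFrobenius E p (k * e) x := by
    intro e x
    rw [iterateFrobenius_def, hk, ← pow_mul]
  have hβq : ∀ i, β i ^ q ^ m = α i := fun i => by rw [hfro]; exact hβ i
  -- the λ_j are all zeros of the lower-degree q-polynomial with coefficients β
  have hQ : ∀ x : E, (∑ i : Fin h, α i * x ^ q ^ (s - 1 - (i : ℕ)) = 0) →
      ∑ i : Fin h, β i * x ^ q ^ (h - 1 - (i : ℕ)) = 0 := by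
    intro x hx
    apply (iterateFrobenius E p (k * m)).injective
    rw [map_sum, map_zero]
    have key : ∀ i : Fin h, iterateFrobenius E p (k * m) (β i * x ^ q ^ (h - 1 - (i : ℕ)))
        = α i * x ^ q ^ (s - 1 - (i : ℕ)) := by
      intro i
      have he : h - 1 - (i : ℕ) + m = s - 1 - (i : ℕ) := by
        have := i.isLt; omega
      rw [map_mul, ← hfro, ← hfro, ← pow_mul, ← pow_add, hβq, he]
    rw [Finset.sum_congr rfl (fun i _ => key i)]
    exact hx
  -- the zero set as an F-subspace
  let Z : Submodule F E :=
    { carrier := {x : E | ∑ i : Fin h, β i * x ^ q ^ (h - 1 - (i : ℕ)) = 0}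
      add_mem' := by
        intro a b ha hb
        simp only [Set.mem_setOf_eq] at ha hb ⊢
        have key : ∀ i : Fin h, β i * (a + b) ^ q ^ (h - 1 - (i : ℕ))
            = β i * a ^ q ^ (h - 1 - (i : ℕ)) + β i * b ^ q ^ (h - 1 - (i : ℕ)) := by
          intro i
          rw [hfro, hfro, hfro, map_add, mul_add]
        rw [Finset.sum_congr rfl (fun i _ => key i), Finset.sum_add_distrib, ha, hb, add_zero]
      zero_mem' := by
        simp only [Set.mem_setOf_eq]
        have : ∀ e : ℕ, (0 : E) ^ q ^ e = 0 := fun e => zero_pow (by positivity)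
        simp [this]
      smul_mem' := by
        intro c x hx
        simp only [Set.mem_setOf_eq] at hx ⊢
        have key : ∀ i : Fin h, β i * (c • x) ^ q ^ (h - 1 - (i : ℕ))
            = algebraMap F E c * (β i * x ^ q ^ (h - 1 - (i : ℕ))) := by
          intro i
          rw [Algebra.smul_def, mul_pow, ← map_pow, hq, FiniteField.pow_card_pow]
          ring
        rw [Finset.sum_congr rfl (fun i _ => key i), ← Finset.mul_sum, hx, mul_zero] }
  have hlamZ : ∀ j, lam j ∈ Z := fun j => hQ (lam j) (hαrel' j)
  -- the direction of the affine span is contained in Z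
  have hdir : (affineSpan F (Set.range lam)).direction ≤ Z := by
    rw [direction_affineSpan, vectorSpan_def]
    rw [Submodule.span_le]
    rintro v ⟨a, ha, b, hb, rfl⟩
    obtain ⟨j, rfl⟩ := ha
    obtain ⟨j', rfl⟩ := hb
    exact sub_mem (hlamZ j) (hlamZ j')
  -- Z has small cardinality: its elements are roots of a nonzero polynomial
  let P : Polynomial E := ∑ i : Fin h, Polynomial.C (β i) * Polynomial.X ^ (q ^ (h - 1 - (i : ℕ)))
  have hexpinj : ∀ i i' : Fin h, q ^ (h - 1 - (i : ℕ)) = q ^ (h - 1 - (i' : ℕ)) → i = i' := by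
    intro i i' hii
    have := Nat.pow_right_injective hq1 hii
    have h1 := i.isLt
    have h2 := i'.isLt
    exact Fin.ext (by omega)
  obtain ⟨i₀, hi₀⟩ : ∃ i, α i ≠ 0 := Function.ne_iff.mp hα0
  have hβi₀ : β i₀ ≠ 0 := by
    intro hb0
    apply hi₀
    rw [← hβq i₀, hb0, zero_pow (by positivity)]
  have hP0 : P ≠ 0 := by
    intro hP
    apply hβi₀
    have : P.coeff (q ^ (h - 1 - (i₀ : ℕ))) = β i₀ := by
      rw [Polynomial.finset_sum_coeff]
      rw [Finset.sum_eq_single i₀]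
      · simp
      · intro i _ hii
        rw [Polynomial.coeff_C_mul, Polynomial.coeff_X_pow, if_neg, mul_zero]
        exact fun hc => hii (hexpinj _ _ hc.symm)
      · simp
    rw [hP] at this
    simpa using this.symm
  have hdeg : P.natDegree ≤ q ^ (h - 1) := by
    apply Polynomial.natDegree_sum_le_of_forall_le
    intro i _
    refine (Polynomial.natDegree_C_mul_le _ _).trans ?_
    rw [Polynomial.natDegree_X_pow]
    exact Nat.pow_le_pow_right (by omega) (by omega)
  haveI : Fintype Z := Fintype.ofFinite _
  have hZroots : ∀ z : Z, (z : E) ∈ P.roots.toFinset := by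
    rintro ⟨z, hz⟩
    rw [Multiset.mem_toFinset, Polynomial.mem_roots hP0]
    simp only [Polynomial.IsRoot, P, Polynomial.eval_finset_sum, Polynomial.eval_mul,
      Polynomial.eval_C, Polynomial.eval_pow, Polynomial.eval_X]
    exact hz
  have hcardZ : Fintype.card Z ≤ q ^ (h - 1) := by
    have hstep : Fintype.card Z ≤ P.roots.toFinset.card := by
      have hinj : Function.Injective
          (fun z : Z => (⟨(z : E), hZroots z⟩ : {x // x ∈ P.roots.toFinset})) :=
        fun a b hab => Subtype.ext
          (congrArg (fun t : {x // x ∈ P.roots.toFinset} => (t : E)) hab)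
      rw [← Fintype.card_coe P.roots.toFinset]
      exact Fintype.card_le_of_injective _ hinj
    calc Fintype.card Z ≤ P.roots.toFinset.card := hstep
      _ ≤ Multiset.card P.roots := P.roots.toFinset_card_le
      _ ≤ P.natDegree := P.card_roots'
      _ ≤ q ^ (h - 1) := hdeg
  have hcard : Fintype.card Z = q ^ finrank F Z := card_eq_pow_finrank
  have hZle : finrank F Z ≤ h - 1 := by
    rw [hcard] at hcardZ
    exact (Nat.pow_le_pow_iff_right hq1).mp hcardZ
  -- the direction equals Z, so Z misses 0... contradiction
  have hDZ : (affineSpan F (Set.range lam)).direction = Z :=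
    Submodule.eq_of_le_of_finrank_le hdir (by rw [hdim]; exact hZle)
  apply h0
  have hmem : lam ⟨0, hpos⟩ ∈ affineSpan F (Set.range lam) :=
    subset_affineSpan F _ ⟨⟨0, hpos⟩, rfl⟩
  have hneg : -lam ⟨0, hpos⟩ ∈ (affineSpan F (Set.range lam)).direction := by
    rw [hDZ]; exact neg_mem (hlamZ ⟨0, hpos⟩)
  have := AffineSubspace.vadd_mem_of_mem_direction hneg hmem
  simpa using this
end

section
/- Let q be a prime power, s ≥ h ≥ 1, t ≥ 2, and let λ_1,...,λ_h ∈ F_{q^s}* and θ_1,...,θ_h ∈ F_{q^s} satisfy ∑_j θ_j λ_j^{q^{s−1−i}} = 0 for i ∈ {0,...,h−2} and ∑_j θ_j λ_j^{q^{s−h}} ≠ 0. Then for any (a_1,a_2,a_3) ∈ F_q × F_{q^s} × F_{q^{st}} not all zero, the number of nonzero x ∈ F_{q^{st}} satisfying a_1 + tr(a_2 λ_j N(x)) + Tr(a_3 λ_j x) = 0 simultaneously for all j ∈ {1,...,h} is at most q^{s−h}·(q^{st} − 1)/(q^s − 1). -/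
open Polynomial Finset

lemma exists_frobAlgHom (F M : Type*) [Field F] [Fintype F] [Field M] [Algebra F M] (m : ℕ) :
    ∃ φ : M →ₐ[F] M, ∀ x, φ x = x ^ (Fintype.card F) ^ m := by
  set p := ringChar F with hp
  haveI : CharP F p := ringChar.charP F
  obtain ⟨n, hprime, hcard⟩ := FiniteField.card F p
  haveI : Fact p.Prime := ⟨hprime⟩
  haveI : CharP M p := charP_of_injective_algebraMap' F p
  haveI : ExpChar M p := .prime hprime
  have key : ∀ x : M, iterateFrobenius M p (n * m) x = x ^ (Fintype.card F) ^ m := by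
    intro x
    rw [iterateFrobenius_def, hcard, ← pow_mul]
  refine ⟨⟨iterateFrobenius M p (n * m), ?_⟩, key⟩
  intro c
  show iterateFrobenius M p (n * m) ((algebraMap F M) c) = _
  rw [key, ← map_pow, FiniteField.pow_card_pow]

lemma frob_smul_sum {F M ι : Type*} [Field F] [Fintype F] [Field M] [Algebra F M] (m : ℕ)
    (S : Finset ι) (c : ι → F) (v : ι → M) :
    (∑ l ∈ S, c l • v l) ^ (Fintype.card F) ^ m = ∑ l ∈ S, c l • (v l ^ (Fintype.card F) ^ m) := by
  obtain ⟨φ, hφ⟩ := exists_frobAlgHom F M m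
  rw [← hφ, map_sum]
  simp_rw [map_smul, hφ]

lemma roots_card_le {R : Type*} [CommRing R] [IsDomain R] {p : Polynomial R} (hp : p ≠ 0)
    {S : Finset R} (hS : ∀ x ∈ S, p.eval x = 0) : S.card ≤ p.natDegree := by
  classical
  calc S.card ≤ p.roots.toFinset.card := by
        apply Finset.card_le_card
        intro x hx
        simp [Multiset.mem_toFinset, mem_roots hp, hS x hx]
    _ ≤ Multiset.card p.roots := p.roots.toFinset_card_le
    _ ≤ p.natDegree := p.card_roots'

lemma moore_aux {F E : Type*} [Field F] [Fintype F] [Field E] [Algebra F E] {r : ℕ}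
    {e : Fin r → E} (he : LinearIndependent F e) {γ : Fin r → E}
    (H : ∀ k : Fin r, ∑ l, γ l * e l ^ (Fintype.card F) ^ ((k : ℕ) + 1) = 0) : γ = 0 := by
  classical
  set q := Fintype.card F with hq
  have hq1 : 1 < q := Fintype.one_lt_card
  set M : Matrix (Fin r) (Fin r) E := Matrix.of fun k l => e l ^ q ^ ((k : ℕ) + 1) with hM
  have hdet : M.det ≠ 0 := by
    intro hdet0
    obtain ⟨δ, hδ0, hδ⟩ := Matrix.exists_vecMul_eq_zero_iff.mpr hdet0
    obtain ⟨k₀, hk₀⟩ := Function.ne_iff.mp hδ0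
    have hr : 0 < r := k₀.pos
    have hδ' : ∀ l, ∑ k : Fin r, δ k * e l ^ q ^ ((k : ℕ) + 1) = 0 := by
      intro l
      simpa [Matrix.vecMul, dotProduct, hM] using congrFun hδ l
    set g : Polynomial E := ∑ k : Fin r, C (δ k) * X ^ q ^ (k : ℕ) with hg
    have hgne : g ≠ 0 := by
      intro h0
      apply hk₀
      have hcoeff : g.coeff (q ^ (k₀ : ℕ)) = δ k₀ := by
        rw [hg, finset_sum_coeff, Finset.sum_eq_single k₀]
        · simp
        · intro k _ hk
          rw [coeff_C_mul, coeff_X_pow, if_neg, mul_zero]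
          exact fun hc => hk (Fin.ext (Nat.pow_right_injective hq1 hc.symm))
        · simp
      rw [h0] at hcoeff
      simpa using hcoeff.symm
    have hdeg : g.natDegree ≤ q ^ (r - 1) := by
      rw [hg]
      apply Polynomial.natDegree_sum_le_of_forall_le
      intro k _
      refine (natDegree_C_mul_X_pow_le _ _).trans ?_
      exact Nat.pow_le_pow_right (by omega) (Nat.le_sub_one_of_lt k.2)
    -- the injection
    have hinj : Function.Injective (fun c : Fin r → F => (∑ l, c l • e l) ^ q) := by
      obtain ⟨φ, hφ⟩ := exists_frobAlgHom F E 1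
      have h1 : Function.Injective fun y : E => y ^ q := by
        intro a b hab
        apply φ.toRingHom.injective
        simpa [hφ] using hab
      refine h1.comp ?_
      intro c c' hcc
      have := sub_eq_zero.mpr hcc
      rw [← Finset.sum_sub_distrib] at this
      simp_rw [← sub_smul] at this
      have hz := Fintype.linearIndependent_iff.mp he _ this
      funext l
      have := hz l
      exact sub_eq_zero.mp this
    have hroots : ∀ c : Fin r → F, g.eval ((∑ l, c l • e l) ^ q) = 0 := by
      intro c
      rw [hg]
      simp only [eval_finset_sum, eval_mul, eval_C, eval_pow, eval_X]
      have hpow : ∀ k : Fin r, ((∑ l, c l • e l) ^ q) ^ q ^ (k : ℕ)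
          = ∑ l, c l • e l ^ q ^ ((k : ℕ) + 1) := by
        intro k
        rw [← pow_mul, ← pow_succ']
        exact frob_smul_sum _ _ _ _
      simp_rw [hpow, Finset.mul_sum]
      rw [Finset.sum_comm]
      simp_rw [mul_smul_comm, ← Finset.smul_sum]
      simp [hδ']
    have hcard : (q : ℕ) ^ r ≤ q ^ (r - 1) := by
      calc q ^ r = Fintype.card (Fin r → F) := by simp [Fintype.card_fun, hq]
        _ = (Finset.image (fun c : Fin r → F => (∑ l, c l • e l) ^ q) Finset.univ).card := by
            rw [Finset.card_image_of_injective _ hinj, Finset.card_univ]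
        _ ≤ g.natDegree := roots_card_le hgne (by
            intro x hx
            obtain ⟨c, _, rfl⟩ := Finset.mem_image.mp hx
            exact hroots c)
        _ ≤ q ^ (r - 1) := hdeg
    exact absurd hcard (by
      apply not_le_of_gt
      exact Nat.pow_lt_pow_right hq1 (Nat.sub_lt hr one_pos))
  by_contra hγ
  apply hdet
  refine Matrix.exists_mulVec_eq_zero_iff.mp ⟨γ, hγ, ?_⟩
  funext k
  simpa [hM, Matrix.mulVec, dotProduct, mul_comm] using H k

lemma indep_of_theta {F E : Type*} [Field F] [Fintype F] [Field E] [Algebra F E] [Fintype E]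
    {s h : ℕ} (hh : 1 ≤ h) (hhs : h ≤ s) (lam theta : Fin h → E)
    (htheta0 : ∀ i : ℕ, i + 2 ≤ h → ∑ j, theta j * lam j ^ Fintype.card F ^ (s - 1 - i) = 0)
    (htheta1 : ∑ j, theta j * lam j ^ Fintype.card F ^ (s - h) ≠ 0) :
    LinearIndependent F lam := by
  classical
  set q := Fintype.card F with hqdef
  have hq1 : 1 < q := Fintype.one_lt_card
  set μ : Fin h → E := fun j => lam j ^ q ^ (s - h) with hμ
  have Hk : ∀ k : ℕ, 1 ≤ k → k ≤ h - 1 → ∑ j, theta j * μ j ^ q ^ k = 0 := by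
    intro k hk1 hk2
    have hi : s - 1 - (h - 1 - k) = s - h + k := by omega
    have := htheta0 (h - 1 - k) (by omega)
    rw [hi] at this
    simpa [hμ, ← pow_mul, ← pow_add] using this
  have hμind : LinearIndependent F μ := by
    by_contra hdep
    set V := Submodule.span F (Set.range μ) with hV
    set r := Module.finrank F V with hrdef
    have hrle : r ≤ h - 1 := by
      have hne : Fintype.card (Fin h) ≠ Set.finrank F (Set.range μ) :=
        fun hc => hdep (linearIndependent_iff_card_eq_finrank_span.mpr hc)
      have hle : Set.finrank F (Set.range μ) ≤ Fintype.card (Fin h) :=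
        finrank_range_le_card μ
      have : Set.finrank F (Set.range μ) = r := rfl
      simp only [Fintype.card_fin] at hne hle
      omega
    set B := Module.finBasis F V with hB
    set e : Fin r → E := fun l => (B l : E) with he
    have heind : LinearIndependent F e :=
      B.linearIndependent.map' V.subtype (Submodule.ker_subtype V)
    have hmem : ∀ j, μ j ∈ V := fun j => Submodule.subset_span (Set.mem_range_self j)
    set b : Fin h → Fin r → F := fun j l => B.repr ⟨μ j, hmem j⟩ l with hb
    have hμeq : ∀ j, μ j = ∑ l, b j l • e l := by
      intro j
      have h1 := B.sum_repr ⟨μ j, hmem j⟩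
      have h2 := congrArg (Subtype.val) h1
      have h3 : ((∑ i, B.repr ⟨μ j, hmem j⟩ i • B i : V) : E) = ∑ l, b j l • e l := by
        rw [AddSubmonoidClass.coe_finset_sum]
        exact Finset.sum_congr rfl (fun l _ => Submodule.coe_smul _ _)
      rw [← h3, h1]
    set γ : Fin r → E := fun l => ∑ j, b j l • theta j with hγ
    have HH : ∀ k : Fin r, ∑ l, γ l * e l ^ q ^ ((k : ℕ) + 1) = 0 := by
      intro k
      have hμpow : ∀ j, μ j ^ q ^ ((k : ℕ) + 1) = ∑ l, b j l • e l ^ q ^ ((k : ℕ) + 1) := by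
        intro j; rw [hμeq j, frob_smul_sum]
      calc ∑ l, γ l * e l ^ q ^ ((k : ℕ) + 1)
          = ∑ l, ∑ j, (b j l • theta j) * e l ^ q ^ ((k : ℕ) + 1) := by
            simp [hγ, Finset.sum_mul]
        _ = ∑ j, theta j * μ j ^ q ^ ((k : ℕ) + 1) := by
            rw [Finset.sum_comm]
            simp_rw [hμpow, Finset.mul_sum, smul_mul_assoc, mul_smul_comm]
        _ = 0 := Hk _ (by omega) (by omega)
    have hγ0 : γ = 0 := moore_aux heind HH
    apply htheta1
    have : ∑ j, theta j * μ j = ∑ l, γ l * e l := by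
      simp_rw [hμeq, Finset.mul_sum, hγ, Finset.sum_mul, smul_mul_assoc, mul_smul_comm]
      rw [Finset.sum_comm]
    rw [hμ] at this
    rw [hqdef] at this
    rw [this, hγ0]
    simp
  obtain ⟨φ, hφ⟩ := exists_frobAlgHom F E (s - h)
  have : μ = φ.toLinearMap ∘ lam := by
    funext j; simp [hμ, hφ, hqdef]
  rw [this] at hμind
  exact LinearIndependent.of_comp φ.toLinearMap hμind

lemma card_affine_le {F E : Type*} [Field F] [Fintype F] [Field E] [Algebra F E] [Fintype E]
    {s h : ℕ} (hE : Module.finrank F E = s) (hhs : h ≤ s)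
    {lam : Fin h → E} (hind : LinearIndependent F lam) (a₁ : F) :
    ∀ (A : Finset E), (∀ y ∈ A, ∀ j, a₁ + Algebra.trace F E (lam j * y) = 0) →
      A.card ≤ Fintype.card F ^ (s - h) := by
  classical
  intro A hAmem
  set Φ : E →ₗ[F] (Fin h → F) := LinearMap.pi (fun j => Algebra.traceForm F E (lam j)) with hΦ
  have hΦapp : ∀ (y : E) (j : Fin h), Φ y j = Algebra.trace F E (lam j * y) := by
    intro y j; simp [hΦ, LinearMap.pi_apply, Algebra.traceForm_apply]
  have hsurj : LinearMap.range Φ = ⊤ := by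
    by_contra hne
    obtain ⟨f, hf0, hfbot⟩ :=
      Submodule.exists_dual_map_eq_bot_of_lt_top (lt_top_iff_ne_top.mpr hne) inferInstance
    set c : Fin h → F := fun j => f (Pi.single j 1) with hc
    have hfv : ∀ v : Fin h → F, f v = ∑ j, v j * c j := by
      intro v
      have hv : ∑ j, Pi.single j (v j) = v := Finset.univ_sum_single v
      conv_lhs => rw [← hv]
      rw [map_sum]
      apply Finset.sum_congr rfl
      intro j _
      have : (Pi.single j (v j) : Fin h → F) = v j • (Pi.single j (1 : F) : Fin h → F) := by
        rw [← Pi.single_smul, smul_eq_mul, mul_one]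
      rw [this, map_smul, smul_eq_mul, hc]
    have hall : ∀ y : E, f (Φ y) = 0 := by
      intro y
      have hmem : Φ y ∈ LinearMap.range Φ := ⟨y, rfl⟩
      have := Submodule.mem_map_of_mem (f := f) hmem
      rw [hfbot] at this
      exact (Submodule.mem_bot F).mp this
    have hlam0 : (∑ j, c j • lam j) = 0 := by
      apply (traceForm_nondegenerate F E).1
      intro y
      have h1 := hall y
      rw [hfv] at h1
      have h2 : (∑ j, c j • lam j) * y = ∑ j, c j • (lam j * y) := by
        rw [Finset.sum_mul]; simp_rw [smul_mul_assoc]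
      rw [Algebra.traceForm_apply, h2, map_sum]
      simp_rw [map_smul, smul_eq_mul]
      rw [← h1]
      apply Finset.sum_congr rfl
      intro j _
      rw [hΦapp, mul_comm]
    have hc0 := Fintype.linearIndependent_iff.mp hind c hlam0
    apply hf0
    apply LinearMap.ext
    intro v
    rw [hfv]
    simp [hc0]
  have hker : Module.finrank F (LinearMap.ker Φ) = s - h := by
    have h1 := LinearMap.finrank_range_add_finrank_ker Φ
    rw [hsurj, finrank_top] at h1
    have h2 : Module.finrank F (Fin h → F) = h := by simp
    rw [h2, hE] at h1
    omega
  set K : Finset E := Finset.univ.filter (fun z => Φ z = 0) with hK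
  have hKcard : K.card = Fintype.card F ^ (s - h) := by
    have e1 : Fintype.card {z : E // Φ z = 0} = K.card := Fintype.card_subtype _
    have e2 : Fintype.card (LinearMap.ker Φ) = Fintype.card {z : E // Φ z = 0} :=
      Fintype.card_congr (Equiv.subtypeEquivRight (by simp [LinearMap.mem_ker]))
    rw [← e1, ← e2, Module.card_eq_pow_finrank (K := F), hker]
  rcases Finset.eq_empty_or_nonempty A with hA | hA
  · rw [hA]; simp
  · obtain ⟨y₀, hy₀⟩ := hA
    rw [← hKcard]
    apply Finset.card_le_card_of_injOn (fun y => y - y₀)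
    · intro y hy
      rw [hK, Finset.mem_coe, Finset.mem_filter]
      refine ⟨Finset.mem_univ _, ?_⟩
      rw [map_sub]
      funext j
      simp only [Pi.sub_apply, Pi.zero_apply, hΦapp]
      have e3 := hAmem y hy j
      have e4 := hAmem y₀ hy₀ j
      have : Algebra.trace F E (lam j * y) = Algebra.trace F E (lam j * y₀) := by linear_combination e3 - e4
      rw [this, sub_self]
    · intro y _ y' _ hyy
      simpa using sub_left_injective hyy

lemma norm_trace_pow {E L : Type*} [Field E] [Fintype E] [Field L] [Fintype L] [Algebra E L]
    {t : ℕ} (hL : Module.finrank E L = t) :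
    (∀ x : L, algebraMap E L (Algebra.norm E x) = x ^ (∑ k ∈ range t, Fintype.card E ^ k)) ∧
    (∀ x : L, algebraMap E L (Algebra.trace E L x) = ∑ k ∈ range t, x ^ Fintype.card E ^ k) := by
  classical
  set q := Fintype.card E with hq
  have hq1 : 1 < q := Fintype.one_lt_card
  obtain ⟨φ, hφ⟩ := exists_frobAlgHom E L 1
  have hbijφ : Function.Bijective φ :=
    (Finite.injective_iff_bijective).mp φ.toRingHom.injective
  set σ : L ≃ₐ[E] L := AlgEquiv.ofBijective φ hbijφ with hσ
  have hσ1 : ∀ x : L, σ x = x ^ q := by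
    intro x; simpa [hσ] using (by simpa using hφ x : φ x = x ^ q)
  have hσpow : ∀ (k : ℕ) (x : L), (σ ^ k) x = x ^ q ^ k := by
    intro k
    induction k with
    | zero => intro x; simp
    | succ k ih =>
      intro x
      rw [pow_succ', AlgEquiv.mul_apply, hσ1, ih, ← pow_mul, pow_succ', Nat.mul_comm]
  have hcardL : Fintype.card L = q ^ t := by
    rw [hq, Module.card_eq_pow_finrank (K := E) (V := L), hL]
  have hordt : t ≤ orderOf σ := by
    have hpos : 0 < orderOf σ := orderOf_pos σ
    have h1 : σ ^ orderOf σ = 1 := pow_orderOf_eq_one σ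
    by_contra hlt
    push_neg at hlt
    -- all elements of L are roots of X^(q^orderOf σ) - X
    set m := orderOf σ with hm
    have hroots : ∀ x : L, (X ^ q ^ m - X : L[X]).eval x = 0 := by
      intro x
      have := congrArg (fun ψ => ψ x) h1
      simp only [AlgEquiv.one_apply] at this
      rw [hσpow] at this
      simp [this]
    have hne : (X ^ q ^ m - X : L[X]) ≠ 0 := by
      intro h0
      have : (X ^ q ^ m - X : L[X]).coeff (q ^ m) = 1 := by
        rw [coeff_sub, coeff_X_pow, if_pos rfl, coeff_X, if_neg, sub_zero]
        · exact fun hc => by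
            have : 1 < q ^ m := Nat.one_lt_pow hpos.ne' hq1
            omega
      rw [h0] at this
      simpa using this
    have hle := roots_card_le hne (S := Finset.univ) (fun x _ => hroots x)
    rw [Finset.card_univ, hcardL] at hle
    have hdeg : (X ^ q ^ m - X : L[X]).natDegree ≤ q ^ m := by
      have h1 : (X : L[X]).natDegree ≤ q ^ m := by
        rw [natDegree_X]
        exact Nat.one_le_pow _ _ (by omega)
      refine (natDegree_sub_le _ _).trans ?_
      rw [natDegree_X_pow]
      exact max_le le_rfl h1
    have : q ^ t ≤ q ^ m := hle.trans hdeg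
    have := (Nat.pow_le_pow_iff_right hq1).mp this
    omega
  haveI : IsGalois E L := inferInstance
  have hcard : Fintype.card (L ≃ₐ[E] L) = t := by
    rw [← Nat.card_eq_fintype_card, IsGalois.card_aut_eq_finrank, hL]
  set e : Fin t → (L ≃ₐ[E] L) := fun k => σ ^ (k : ℕ) with he
  have hinj : Function.Injective e := by
    intro k k' hkk
    exact Fin.ext (pow_injOn_Iio_orderOf (by exact lt_of_lt_of_le k.2 hordt)
      (lt_of_lt_of_le k'.2 hordt) hkk)
  have hbij : Function.Bijective e :=
    (Fintype.bijective_iff_injective_and_card e).mpr ⟨hinj, by rw [hcard, Fintype.card_fin]⟩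
  constructor
  · intro x
    have hprod := Fintype.prod_bijective e hbij (fun k => x ^ q ^ (k : ℕ)) (fun ψ => ψ x)
        (fun k => (hσpow _ x).symm)
    rw [Algebra.norm_eq_prod_automorphisms, ← hprod, Finset.prod_pow_eq_pow_sum]
    congr 1
    exact Fin.sum_univ_eq_sum_range _ t
  · intro x
    have hsum := Fintype.sum_bijective e hbij ((fun k => x ^ q ^ (k : ℕ) : Fin t → L))
        (fun ψ : L ≃ₐ[E] L => (ψ x : L)) (fun k => (hσpow _ x).symm)
    rw [trace_eq_sum_automorphisms, ← hsum]
    exact Fin.sum_univ_eq_sum_range (fun k => x ^ q ^ k) t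

lemma fiber_card_le {E L : Type*} [Field E] [Fintype E] [Field L] [Fintype L] [Algebra E L]
    {t : ℕ} (ht : 2 ≤ t) (hL : Module.finrank E L = t) (a₂ : E) (a₃ : L)
    (ha : ¬(a₂ = 0 ∧ a₃ = 0)) (c : E) (S : Finset L)
    (hS : ∀ x ∈ S, a₂ * Algebra.norm E x + Algebra.trace E L (a₃ * x) = c) :
    S.card ≤ ∑ k ∈ range t, Fintype.card E ^ k := by
  classical
  set q := Fintype.card E with hq
  have hq1 : 1 < q := Fintype.one_lt_card
  obtain ⟨hnorm, htrace⟩ := norm_trace_pow hL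
  set D := ∑ k ∈ range t, q ^ k with hD
  by_cases ha2 : a₂ = 0
  · -- linear case
    have ha3 : a₃ ≠ 0 := fun h3 => ha ⟨ha2, h3⟩
    have hS' : ∀ x ∈ S, Algebra.trace E L (a₃ * x) = c := by
      intro x hx
      have := hS x hx
      rwa [ha2, zero_mul, zero_add] at this
    set g : L →ₗ[E] E := (Algebra.traceForm E L) a₃ with hg
    have hgapp : ∀ x, g x = Algebra.trace E L (a₃ * x) := fun x => rfl
    obtain ⟨x₁, hx₁⟩ : ∃ x₁, g x₁ ≠ 0 := by
      by_contra hno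
      push_neg at hno
      exact ha3 ((traceForm_nondegenerate E L).1 a₃ (fun n => hno n))
    have hsurj : LinearMap.range g = ⊤ := by
      rw [LinearMap.range_eq_top]
      intro cc
      refine ⟨(cc / g x₁) • x₁, ?_⟩
      rw [map_smul, smul_eq_mul, div_mul_cancel₀ _ hx₁]
    have hker : Module.finrank E (LinearMap.ker g) = t - 1 := by
      have h1 := LinearMap.finrank_range_add_finrank_ker g
      rw [hsurj, finrank_top, Module.finrank_self, hL] at h1
      omega
    rcases Finset.eq_empty_or_nonempty S with hSe | ⟨x₀, hx₀⟩
    · rw [hSe]; simp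
    · set K : Finset L := Finset.univ.filter (fun z => g z = 0) with hK
      have hcard : S.card ≤ K.card := by
        apply Finset.card_le_card_of_injOn (fun x => x - x₀)
        · intro x hx
          rw [hK, Finset.mem_coe, Finset.mem_filter]
          refine ⟨Finset.mem_univ _, ?_⟩
          rw [map_sub, hgapp, hgapp, hS' x hx, hS' x₀ hx₀, sub_self]
        · intro y _ y' _ hyy
          simpa using sub_left_injective hyy
      have hKcard : K.card = q ^ (t - 1) := by
        have e1 : Fintype.card {z : L // g z = 0} = K.card := Fintype.card_subtype _
        have e2 : Fintype.card (LinearMap.ker g) = Fintype.card {z : L // g z = 0} :=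
          Fintype.card_congr (Equiv.subtypeEquivRight (by simp [LinearMap.mem_ker]))
        rw [← e1, ← e2, Module.card_eq_pow_finrank (K := E), hker]
      rw [hKcard] at hcard
      refine hcard.trans ?_
      refine Finset.single_le_sum (f := fun k => q ^ k) (fun k _ => Nat.zero_le _) ?_
      exact Finset.mem_range.mpr (by omega)
  · -- polynomial case
    have hkD : ∀ k, k < t → q ^ k < D := by
      intro k hk
      rw [hD]
      set k₂ : ℕ := if k = 0 then 1 else 0 with hk₂
      refine Finset.single_lt_sum (i := k) (j := k₂) ?_ (mem_range.mpr hk) ?_ ?_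
        (fun _ _ _ => Nat.zero_le _)
      · rw [hk₂]; split <;> omega
      · rw [hk₂]; split <;> (apply mem_range.mpr; omega)
      · exact Nat.pow_pos (by omega)
    have hD0 : 0 < D := by
      have := hkD 0 (by omega)
      omega
    set P : L[X] := C (algebraMap E L a₂) * X ^ D +
      (∑ k ∈ range t, C (a₃ ^ q ^ k) * X ^ (q ^ k)) - C (algebraMap E L c) with hP
    have heval : ∀ x ∈ S, P.eval x = 0 := by
      intro x hx
      have h1 := hS x hx
      have h2 : P.eval x = algebraMap E L a₂ * x ^ D +
          (∑ k ∈ range t, a₃ ^ q ^ k * x ^ q ^ k) - algebraMap E L c := by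
        simp [hP, eval_finset_sum]
      have h3 : ∑ k ∈ range t, a₃ ^ q ^ k * x ^ q ^ k
          = algebraMap E L (Algebra.trace E L (a₃ * x)) := by
        rw [htrace]
        exact (Finset.sum_congr rfl (fun k _ => (mul_pow _ _ _))).symm
      rw [h2, ← hnorm x, h3, ← map_mul, ← map_add, h1, sub_self]
    have hcoeff : P.coeff D = algebraMap E L a₂ := by
      rw [hP, coeff_sub, coeff_add, coeff_C_mul, coeff_X_pow, if_pos rfl, mul_one,
        finset_sum_coeff]
      have hz : ∀ k ∈ range t, (C (a₃ ^ q ^ k) * X ^ (q ^ k)).coeff D = 0 := by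
        intro k hk
        rw [coeff_C_mul, coeff_X_pow, if_neg (hkD k (mem_range.mp hk)).ne', mul_zero]
      rw [Finset.sum_eq_zero hz, add_zero, coeff_C, if_neg hD0.ne', sub_zero]
    have hPne : P ≠ 0 := by
      intro h0
      rw [h0, coeff_zero] at hcoeff
      exact ha2 ((_root_.map_eq_zero _).mp hcoeff.symm)
    have hdeg : P.natDegree ≤ D := by
      rw [hP]
      refine (natDegree_sub_le _ _).trans (max_le ?_ ?_)
      · refine (natDegree_add_le _ _).trans (max_le ?_ ?_)
        · exact (natDegree_C_mul_le _ _).trans (by rw [natDegree_X_pow])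
        · refine natDegree_sum_le_of_forall_le _ _ (fun k hk => ?_)
          exact (natDegree_C_mul_X_pow_le _ _).trans (hkD k (mem_range.mp hk)).le
      · simp [natDegree_C]
    exact (roots_card_le hPne heval).trans hdeg

/-- Root-counting step of the second construction: given `λ_j ∈ F_{q^s}^*` and `θ_j` with
`∑_j θ_j λ_j^{q^{s-1-i}} = 0` for `i ≤ h-2` and `∑_j θ_j λ_j^{q^{s-h}} ≠ 0`, for every
nonzero triple `(a_1,a_2,a_3) ∈ F_q × F_{q^s} × F_{q^{st}}` the number of nonzero
`x ∈ F_{q^{st}}` with `a_1 + tr(a_2 λ_j N(x)) + Tr(a_3 λ_j x) = 0` for all `j` is at most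
`q^{s-h} (q^{st}-1)/(q^s-1)`. -/
theorem count_common_zeros_le
    {F E L : Type*} [Field F] [Fintype F] [Field E] [Algebra F E] [Field L]
    [Algebra E L] [Algebra F L] [IsScalarTower F E L] [Fintype E] [Fintype L]
    {s t h : ℕ} (hh : 1 ≤ h) (hhs : h ≤ s) (ht : 2 ≤ t)
    (hE : Module.finrank F E = s) (hL : Module.finrank E L = t)
    (lam theta : Fin h → E) (hlam : ∀ j, lam j ≠ 0)
    (htheta0 : ∀ i : ℕ, i + 2 ≤ h →
      ∑ j, theta j * lam j ^ Fintype.card F ^ (s - 1 - i) = 0)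
    (htheta1 : ∑ j, theta j * lam j ^ Fintype.card F ^ (s - h) ≠ 0)
    (a₁ : F) (a₂ : E) (a₃ : L) (ha : ¬(a₁ = 0 ∧ a₂ = 0 ∧ a₃ = 0)) :
    Nat.card {x : L // x ≠ 0 ∧ ∀ j,
        a₁ + Algebra.trace F E (a₂ * lam j * Algebra.norm E x) +
          Algebra.trace F L (a₃ * algebraMap E L (lam j) * x) = 0} ≤
      Fintype.card F ^ (s - h) *
        ((Fintype.card F ^ (s * t) - 1) / (Fintype.card F ^ s - 1)) := by
  classical
  set q := Fintype.card F with hqdef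
  have hq1 : 1 < q := Fintype.one_lt_card
  have hcardE : Fintype.card E = q ^ s := by
    rw [hqdef, Module.card_eq_pow_finrank (K := F) (V := E), hE]
  have hcardEpos : 1 ≤ Fintype.card E ^ s := Nat.one_le_pow _ _ Fintype.card_pos
  set D := ∑ k ∈ range t, Fintype.card E ^ k with hD
  -- identify the divisor expression with D
  have hDiv : (q ^ (s * t) - 1) / (q ^ s - 1) = D := by
    have hqs1 : 1 ≤ q ^ s := Nat.one_le_pow _ _ (by omega)
    have hqst1 : 1 ≤ q ^ (s * t) := Nat.one_le_pow _ _ (by omega)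
    have hmul : (q ^ s - 1) * D = q ^ (s * t) - 1 := by
      have hz : ((q : ℤ) ^ s - 1) * (D : ℤ) = (q : ℤ) ^ (s * t) - 1 := by
        have hDz : (D : ℤ) = ∑ k ∈ range t, ((q : ℤ) ^ s) ^ k := by
          rw [hD]
          push_cast [hcardE]
          rfl
        rw [hDz, mul_comm, geom_sum_mul, ← pow_mul]
      have : ((q ^ s - 1) * D : ℤ) = ((q ^ (s * t) - 1 : ℕ) : ℤ) := by
        push_cast [hqs1, hqst1]
        exact hz
      exact_mod_cast this
    rw [← hmul, Nat.mul_div_cancel_left _ (by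
      have : 2 ≤ q ^ s := by
        calc 2 ≤ q := hq1
          _ = q ^ 1 := (pow_one q).symm
          _ ≤ q ^ s := Nat.pow_le_pow_right (by omega) (by omega)
      omega)]
  rw [hDiv]
  by_cases hzero : a₂ = 0 ∧ a₃ = 0
  · obtain ⟨h2, h3⟩ := hzero
    have ha1 : a₁ ≠ 0 := fun h1 => ha ⟨h1, h2, h3⟩
    haveI : IsEmpty {x : L // x ≠ 0 ∧ ∀ j,
        a₁ + Algebra.trace F E (a₂ * lam j * Algebra.norm E x) +
          Algebra.trace F L (a₃ * algebraMap E L (lam j) * x) = 0} := by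
      refine ⟨fun ⟨x, hx0, hxj⟩ => ?_⟩
      have := hxj ⟨0, by omega⟩
      rw [h2, h3] at this
      simp at this
      exact ha1 this
    rw [Nat.card_of_isEmpty]
    exact Nat.zero_le _
  · have hind : LinearIndependent F lam :=
      indep_of_theta hh hhs lam theta htheta0 htheta1
    set f : L → E := fun x => a₂ * Algebra.norm E x + Algebra.trace E L (a₃ * x) with hf
    have hcond : ∀ (x : L) (j : Fin h),
        a₁ + Algebra.trace F E (a₂ * lam j * Algebra.norm E x) +
          Algebra.trace F L (a₃ * algebraMap E L (lam j) * x)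
        = a₁ + Algebra.trace F E (lam j * f x) := by
      intro x j
      have e1 : Algebra.trace F L (a₃ * algebraMap E L (lam j) * x)
          = Algebra.trace F E (lam j * Algebra.trace E L (a₃ * x)) := by
        rw [← Algebra.trace_trace (S := E)]
        congr 1
        have : a₃ * algebraMap E L (lam j) * x = lam j • (a₃ * x) := by
          rw [Algebra.smul_def]
          ring
        rw [this, map_smul, smul_eq_mul]
      have e2 : a₂ * lam j * Algebra.norm E x = lam j * (a₂ * Algebra.norm E x) := by ring
      rw [e1, e2, hf]
      rw [mul_add, map_add]
      ring
    have hNat : Nat.card {x : L // x ≠ 0 ∧ ∀ j,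
        a₁ + Algebra.trace F E (a₂ * lam j * Algebra.norm E x) +
          Algebra.trace F L (a₃ * algebraMap E L (lam j) * x) = 0}
        = (Finset.univ.filter (fun x : L => x ≠ 0 ∧ ∀ j,
          a₁ + Algebra.trace F E (a₂ * lam j * Algebra.norm E x) +
          Algebra.trace F L (a₃ * algebraMap E L (lam j) * x) = 0)).card := by
      rw [Nat.card_eq_fintype_card]
      convert Fintype.card_subtype _
    rw [hNat]
    set A : Finset E := Finset.univ.filter
      (fun y : E => ∀ j, a₁ + Algebra.trace F E (lam j * y) = 0) with hA
    have hsub : (Finset.univ.filter (fun x : L => x ≠ 0 ∧ ∀ j,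
          a₁ + Algebra.trace F E (a₂ * lam j * Algebra.norm E x) +
          Algebra.trace F L (a₃ * algebraMap E L (lam j) * x) = 0))
        ⊆ A.biUnion (fun cE => Finset.univ.filter (fun x : L => f x = cE)) := by
      intro x hx
      rw [Finset.mem_filter] at hx
      obtain ⟨-, -, hxj⟩ := hx
      rw [Finset.mem_biUnion]
      refine ⟨f x, ?_, by simp⟩
      rw [hA, Finset.mem_filter]
      exact ⟨Finset.mem_univ _, fun j => by rw [← hcond x j]; exact hxj j⟩
    calc (Finset.univ.filter (fun x : L => x ≠ 0 ∧ ∀ j,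
          a₁ + Algebra.trace F E (a₂ * lam j * Algebra.norm E x) +
          Algebra.trace F L (a₃ * algebraMap E L (lam j) * x) = 0)).card
        ≤ (A.biUnion (fun cE => Finset.univ.filter (fun x : L => f x = cE))).card :=
          Finset.card_le_card hsub
      _ ≤ ∑ cE ∈ A, (Finset.univ.filter (fun x : L => f x = cE)).card :=
          Finset.card_biUnion_le
      _ ≤ ∑ _cE ∈ A, D := by
          refine Finset.sum_le_sum (fun cE _ => ?_)
          refine fiber_card_le ht hL a₂ a₃ hzero cE _ (fun x hx => ?_)
          rw [Finset.mem_filter] at hx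
          exact hx.2
      _ = A.card * D := by rw [Finset.sum_const, smul_eq_mul]
      _ ≤ q ^ (s - h) * D := by
          apply Nat.mul_le_mul_right
          refine card_affine_le hE hhs hind a₁ A (fun y hy => ?_)
          rw [hA, Finset.mem_filter] at hy
          exact hy.2
end

section
/- Let q ≥ 2 and h ≥ 1 be integers, and set d = q^{2h} − q^h and f = q^{h+1}(q^h − 1)/(q^{h+1} − 1). Then ⌈d/f⌉ = q^h. -/
/-- For integers `q ≥ 2`, `h ≥ 1`, with `d = q^{2h} - q^h` and
`f = q^{h+1}(q^h - 1)/(q^{h+1} - 1)` (a rational number), one has `⌈d/f⌉ = q^h`. -/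
theorem ceil_d_div_f_eq
    {q h : ℕ} (hq : 2 ≤ q) (hh : 1 ≤ h) :
    ⌈((q : ℚ) ^ (2 * h) - (q : ℚ) ^ h) /
        (((q : ℚ) ^ (h + 1) * ((q : ℚ) ^ h - 1)) / ((q : ℚ) ^ (h + 1) - 1))⌉ =
      (q : ℤ) ^ h := by
  have hq2 : (2 : ℚ) ≤ (q : ℚ) := by exact_mod_cast hq
  have hq0 : (0 : ℚ) < (q : ℚ) := by linarith
  have hph : (2 : ℚ) ≤ (q : ℚ) ^ h := by
    calc (2:ℚ) ≤ (q:ℚ) := hq2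
    _ = (q:ℚ)^1 := (pow_one _).symm
    _ ≤ (q:ℚ)^h := pow_le_pow_right₀ (by linarith) hh
  have hph1 : (2 : ℚ) ≤ (q : ℚ) ^ (h + 1) := by
    calc (2:ℚ) ≤ (q:ℚ) := hq2
    _ = (q:ℚ)^1 := (pow_one _).symm
    _ ≤ (q:ℚ)^(h+1) := pow_le_pow_right₀ (by linarith) (by omega)
  have h1 : (q : ℚ) ^ h - 1 ≠ 0 := by linarith
  have h2 : (q : ℚ) ^ (h + 1) - 1 ≠ 0 := by linarith
  have h3 : (q : ℚ) ^ (h + 1) ≠ 0 := by positivity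
  have hqne : (q : ℚ) ≠ 0 := by positivity
  have key : ((q : ℚ) ^ (2 * h) - (q : ℚ) ^ h) /
        (((q : ℚ) ^ (h + 1) * ((q : ℚ) ^ h - 1)) / ((q : ℚ) ^ (h + 1) - 1)) =
      (q : ℚ) ^ h - 1 / q := by
    have h2h : (q : ℚ) ^ (2 * h) = (q : ℚ) ^ h * (q : ℚ) ^ h := by
      rw [two_mul, pow_add]
    field_simp
    ring_nf
  rw [key]
  have hinv0 : (0 : ℚ) < 1 / q := by positivity
  have hinv1 : 1 / (q : ℚ) < 1 := by
    rw [div_lt_one hq0]; linarith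
  rw [Int.ceil_eq_iff]
  constructor
  · push_cast
    linarith
  · push_cast
    linarith
end

section
/- There is no additive [q^{2h} − 1, (3h+1)/h, d]_q^h code with d ≥ q^{2h} − q^h, i.e., every additive code over F_{q^h} of length q^{2h} − 1 and F_q-dimension 3h + 1 has minimum distance at most q^{2h} − q^h − 1. (This may be derived assuming the additive Griesmer bound: an additive [n, r/h, d]_q^h code satisfies n ≥ ⌈r/h⌉ + d − m + ⌈d/f(q,m)⌉, where r = (k−1)h + r_0 with k = ⌈r/h⌉ and 1 ≤ r_0 ≤ h, f(q,m) = q^{(m−2)h+r_0}(q^h − 1)/(q^{(m−2)h+r_0} − 1), and m is determined by q^{(m−2)h+r_0} < d ≤ q^{(m−1)h+r_0}.) -/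
private lemma ceil_aux (q e hh d : ℕ) (t : ℤ) (hq : 2 ≤ q) (he : 1 ≤ e) (hh1 : 1 ≤ hh)
    (hnum : (t : ℚ) * ((q : ℚ) ^ e * ((q : ℚ) ^ hh - 1)) < (d : ℚ) * ((q : ℚ) ^ e - 1)) :
    t + 1 ≤ ⌈(d : ℚ) / ((q : ℚ) ^ e * ((q : ℚ) ^ hh - 1) / ((q : ℚ) ^ e - 1))⌉ := by
  have hq' : (2 : ℚ) ≤ (q : ℚ) := by exact_mod_cast hq
  have hA : (1 : ℚ) < (q : ℚ) ^ e := one_lt_pow₀ (by linarith) (by omega)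
  have hB : (0 : ℚ) < (q : ℚ) ^ hh - 1 := by
    have : (1 : ℚ) < (q : ℚ) ^ hh := one_lt_pow₀ (by linarith) (by omega)
    linarith
  have hC : (0 : ℚ) < (q : ℚ) ^ e - 1 := by linarith
  have hpos : (0 : ℚ) < (q : ℚ) ^ e * ((q : ℚ) ^ hh - 1) / ((q : ℚ) ^ e - 1) := by
    positivity
  rw [Int.add_one_le_iff, Int.lt_ceil, lt_div_iff₀ hpos, ← mul_div_assoc, div_lt_iff₀ hC]
  exact hnum

set_option maxHeartbeats 1000000 in
/-- Assuming the additive Griesmer bound, there is no additive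
`[q^{2h}-1, (3h+1)/h, d]_q^h` code with `d ≥ q^{2h} - q^h`: every additive code over
`F_{q^h}` of length `q^{2h} - 1` and `F_q`-dimension `3h + 1` has minimum distance at
most `q^{2h} - q^h - 1`. -/
theorem no_additive_code_with_large_distance
    {F K : Type*} [Field F] [Fintype F] [Field K] [Algebra F K] [DecidableEq K]
    {h : ℕ} (hh : 1 ≤ h) (hK : Module.finrank F K = h)
    (hGriesmer : ∀ (n r d m : ℕ) (C' : Submodule F (Fin n → K)),
      Module.finrank F C' = r →
      (∀ c ∈ C', c ≠ 0 → d ≤ hammingNorm c) →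
      (∃ c ∈ C', c ≠ 0 ∧ hammingNorm c = d) →
      Fintype.card F ^ ((m - 2) * h + (r - ((r + h - 1) / h - 1) * h)) < d →
      d ≤ Fintype.card F ^ ((m - 1) * h + (r - ((r + h - 1) / h - 1) * h)) →
      (((r + h - 1) / h : ℕ) : ℤ) + (d : ℤ) - (m : ℤ) +
        ⌈(d : ℚ) /
          (((Fintype.card F : ℚ) ^ ((m - 2) * h + (r - ((r + h - 1) / h - 1) * h)) *
              ((Fintype.card F : ℚ) ^ h - 1)) /
            ((Fintype.card F : ℚ) ^ ((m - 2) * h + (r - ((r + h - 1) / h - 1) * h)) - 1))⌉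
        ≤ (n : ℤ)) :
    ∀ C : Submodule F (Fin (Fintype.card F ^ (2 * h) - 1) → K),
      Module.finrank F C = 3 * h + 1 →
      ∃ c ∈ C, c ≠ 0 ∧
        hammingNorm c ≤ Fintype.card F ^ (2 * h) - Fintype.card F ^ h - 1 := by
  set q := Fintype.card F with hqdef
  intro C hC
  by_contra hcon
  push_neg at hcon
  have hq2 : 2 ≤ q := Fintype.one_lt_card
  have hq1 : 1 ≤ q := by omega
  have hqh1 : 1 ≤ q ^ h := Nat.one_le_pow _ _ (by omega)
  have hqhlt : q ^ h < q ^ (2 * h) :=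
    Nat.pow_lt_pow_right (by omega) (by omega)
  -- every nonzero codeword has weight at least q^(2h) - q^h
  have hlow : ∀ c ∈ C, c ≠ 0 → q ^ (2 * h) - q ^ h ≤ hammingNorm c := by
    intro c hc hc0
    have := hcon c hc hc0
    omega
  -- C contains a nonzero vector
  have hne : ∃ c ∈ C, c ≠ 0 := by
    by_contra hz
    push_neg at hz
    have hbot : C = ⊥ := (Submodule.eq_bot_iff C).mpr hz
    rw [hbot, finrank_bot] at hC
    omega
  -- minimum distance d
  set S : Set ℕ := {w | ∃ c ∈ C, c ≠ 0 ∧ hammingNorm c = w} with hSdef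
  have hSne : S.Nonempty := by
    obtain ⟨c, hc, hc0⟩ := hne
    exact ⟨hammingNorm c, c, hc, hc0, rfl⟩
  set d := sInf S with hddef
  have hdS : d ∈ S := Nat.sInf_mem hSne
  obtain ⟨c₀, hc₀C, hc₀0, hc₀d⟩ := hdS
  have hdle : ∀ c ∈ C, c ≠ 0 → d ≤ hammingNorm c := by
    intro c hc hc0
    exact Nat.sInf_le ⟨c, hc, hc0, rfl⟩
  have hd_lb : q ^ (2 * h) - q ^ h ≤ d := by
    rw [← hc₀d]; exact hlow c₀ hc₀C hc₀0
  have hd_ub : d ≤ q ^ (2 * h) - 1 := by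
    have h1 : hammingNorm c₀ ≤ Fintype.card (Fin (q ^ (2 * h) - 1)) :=
      hammingNorm_le_card_fintype
    rw [Fintype.card_fin] at h1
    omega
  -- arithmetic normalizations
  have e4 : (3 * h + 1 + h - 1) / h = 4 := by
    rw [show 3 * h + 1 + h - 1 = 4 * h by omega]
    exact Nat.mul_div_cancel 4 (by omega)
  have e1 : 3 * h + 1 - ((3 * h + 1 + h - 1) / h - 1) * h = 1 := by
    rw [e4]; omega
  -- rational versions of bounds
  have hq2Q : (2 : ℚ) ≤ (q : ℚ) := by exact_mod_cast hq2
  have hd_lbQ : (q : ℚ) ^ (2 * h) - (q : ℚ) ^ h ≤ (d : ℚ) := by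
    have := hd_lb
    have hle : q ^ h ≤ q ^ (2 * h) := le_of_lt hqhlt
    push_cast [Nat.cast_sub hle] at this ⊢
    exact_mod_cast this
  by_cases hh1 : h = 1
  · -- h = 1
    subst hh1
    by_cases hq3 : q = 2
    · -- dimension contradiction: finrank C = 4 > 3
      have : FiniteDimensional F K := FiniteDimensional.of_finrank_pos (by omega)
      have hle := Submodule.finrank_le C
      have hamb : Module.finrank F (Fin (q ^ (2 * 1) - 1) → K) =
          (q ^ (2 * 1) - 1) * Module.finrank F K := by
        rw [Module.finrank_pi_fintype, Finset.sum_const, Finset.card_univ,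
          Fintype.card_fin, smul_eq_mul]
      rw [hC, hamb, hK, hq3] at hle
      norm_num at hle
    · -- q ≥ 3, use m = 2
      have hq3' : 3 ≤ q := by omega
      have c1 : q ^ ((2 - 2) * 1 + (3 * 1 + 1 - ((3 * 1 + 1 + 1 - 1) / 1 - 1) * 1)) < d := by
        rw [e1]
        have h2q : 2 * q < q ^ (2 * 1) := by
          rw [show q ^ (2 * 1) = q * q by ring]
          nlinarith [hq3']
        have hd := hd_lb
        rw [pow_one] at hd
        norm_num
        omega
      have c2 : d ≤ q ^ ((2 - 1) * 1 + (3 * 1 + 1 - ((3 * 1 + 1 + 1 - 1) / 1 - 1) * 1)) := by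
        rw [e1]
        calc d ≤ q ^ (2 * 1) - 1 := hd_ub
          _ ≤ q ^ (2 * 1) := Nat.sub_le _ _
          _ ≤ q ^ ((2 - 1) * 1 + 1) := Nat.pow_le_pow_right hq1 (by norm_num)
      have key := hGriesmer (q ^ (2 * 1) - 1) (3 * 1 + 1) d 2 C hC hdle
        ⟨c₀, hc₀C, hc₀0, hc₀d⟩ c1 c2
      rw [e4] at key
      rw [show 3 * 1 + 1 - (4 - 1) * 1 = 1 from by omega] at key
      -- ceiling lower bound with t = q - 2
      have hceil : ((q : ℤ) - 2) + 1 ≤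
          ⌈(d : ℚ) / ((q : ℚ) ^ ((2 - 2) * 1 + 1) * ((q : ℚ) ^ 1 - 1) /
            ((q : ℚ) ^ ((2 - 2) * 1 + 1) - 1))⌉ := by
        apply ceil_aux q ((2 - 2) * 1 + 1) 1 d ((q : ℤ) - 2) hq2 (by norm_num) (by norm_num)
        have hd' : (q : ℚ) * (q : ℚ) - (q : ℚ) ≤ (d : ℚ) := by
          have h' := hd_lbQ
          rw [show ((q : ℚ)) ^ (2 * 1) = (q : ℚ) * (q : ℚ) from by ring, pow_one] at h'
          exact h'
        push_cast
        norm_num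
        have hq1Q : (0 : ℚ) < (q : ℚ) - 1 := by linarith
        have h5 : ((q : ℚ) * (q : ℚ) - (q : ℚ)) * ((q : ℚ) - 1) ≤ (d : ℚ) * ((q : ℚ) - 1) :=
          mul_le_mul_of_nonneg_right hd' (le_of_lt hq1Q)
        have hid : ((q : ℚ) - 2) * ((q : ℚ) * ((q : ℚ) - 1)) + (q : ℚ) * ((q : ℚ) - 1)
            = ((q : ℚ) * (q : ℚ) - (q : ℚ)) * ((q : ℚ) - 1) := by ring
        have hpp : (0 : ℚ) < (q : ℚ) * ((q : ℚ) - 1) := mul_pos (by linarith) hq1Q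
        nlinarith [h5, hid, hpp]
      -- final contradiction
      have hcast : ((q ^ (2 * 1) - 1 : ℕ) : ℤ) = (q : ℤ) ^ (2 * 1) - 1 := by
        rw [Nat.cast_sub (Nat.one_le_pow _ _ (show 0 < q by omega))]
        push_cast
        ring
      have hd_lbZ : (q : ℤ) ^ (2 * 1) - (q : ℤ) ^ 1 ≤ (d : ℤ) := by
        have := hd_lb
        have hle : q ^ 1 ≤ q ^ (2 * 1) := le_of_lt hqhlt
        push_cast [Nat.cast_sub hle] at this ⊢
        exact_mod_cast this
      rw [hcast] at key
      have hq2Z : (2 : ℤ) ≤ (q : ℤ) := by exact_mod_cast hq2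
      have hpow1 : (q : ℤ) ^ 1 = (q : ℤ) := pow_one _
      have l4 : (((4 : ℕ)) : ℤ) = 4 := by norm_num
      have l2 : (((2 : ℕ)) : ℤ) = 2 := by norm_num
      linarith [key, hceil, hd_lbZ, hpow1, l4, l2]
  · -- h ≥ 2, use m = 3
    have hh2 : 2 ≤ h := by omega
    have hA : q + 1 < q ^ h := by
      have h2 : q * q ≤ q ^ h := by
        calc q * q = q ^ 2 := (sq q).symm
          _ ≤ q ^ h := Nat.pow_le_pow_right (by omega) hh2
      nlinarith
    have hkey : q ^ (h + 1) + q ^ h < q ^ (2 * h) := by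
      have e1' : q ^ (h + 1) = q ^ h * q := pow_succ q h
      have e2' : q ^ (2 * h) = q ^ h * q ^ h := by rw [two_mul, pow_add]
      rw [e1', e2']
      calc q ^ h * q + q ^ h = q ^ h * (q + 1) := by ring
        _ < q ^ h * q ^ h := mul_lt_mul_of_pos_left hA (by omega)
    have eexp : (3 - 2) * h + 1 = h + 1 := by omega
    have c1 : q ^ ((3 - 2) * h + (3 * h + 1 - ((3 * h + 1 + h - 1) / h - 1) * h)) < d := by
      rw [e1, eexp]
      omega
    have c2 : d ≤ q ^ ((3 - 1) * h + (3 * h + 1 - ((3 * h + 1 + h - 1) / h - 1) * h)) := by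
      rw [e1]
      have : q ^ (2 * h) ≤ q ^ ((3 - 1) * h + 1) := Nat.pow_le_pow_right (by omega) (by omega)
      omega
    have key := hGriesmer (q ^ (2 * h) - 1) (3 * h + 1) d 3 C hC hdle
      ⟨c₀, hc₀C, hc₀0, hc₀d⟩ c1 c2
    rw [e4] at key
    rw [show 3 * h + 1 - (4 - 1) * h = 1 from by omega] at key
    -- ceiling lower bound with t = q^h - 1, so t + 1 = q^h
    have hceil : (((q : ℤ) ^ h - 1)) + 1 ≤
        ⌈(d : ℚ) / ((q : ℚ) ^ ((3 - 2) * h + 1) * ((q : ℚ) ^ h - 1) /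
          ((q : ℚ) ^ ((3 - 2) * h + 1) - 1))⌉ := by
      apply ceil_aux q ((3 - 2) * h + 1) h d ((q : ℤ) ^ h - 1) hq2 (by omega) (by omega)
      have heq : ((3 - 2) * h + 1) = h + 1 := by omega
      rw [heq]
      set X : ℚ := (q : ℚ) ^ h with hX
      have hX2 : (2 : ℚ) ≤ X := by
        have : (2 : ℚ) ^ h ≤ (q : ℚ) ^ h := pow_le_pow_left₀ (by norm_num) hq2Q h
        have h2 : (2 : ℚ) ≤ (2 : ℚ) ^ h := by
          calc (2 : ℚ) = 2 ^ 1 := (pow_one 2).symm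
            _ ≤ 2 ^ h := pow_le_pow_right₀ (by norm_num) hh
        linarith
      have hY : (q : ℚ) ^ (h + 1) = (q : ℚ) * X := by rw [hX, pow_succ]; ring
      have h2h : (q : ℚ) ^ (2 * h) = X * X := by rw [hX, two_mul, pow_add]
      have hdQ : X * X - X ≤ (d : ℚ) := by rw [← h2h]; linarith [hd_lbQ]
      have ht : (((q : ℤ) ^ h - 1 : ℤ) : ℚ) = X - 1 := by push_cast; rw [hX]
      rw [ht, hY]
      have h5 : (X * X - X) * ((q : ℚ) * X - 1) ≤ (d : ℚ) * ((q : ℚ) * X - 1) := by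
        apply mul_le_mul_of_nonneg_right hdQ
        nlinarith
      have hid : (X - 1) * ((q : ℚ) * X * (X - 1)) + X * (X - 1) * ((q : ℚ) - 1)
          = (X * X - X) * ((q : ℚ) * X - 1) := by ring
      nlinarith [h5, hid, mul_pos (mul_pos (show (0:ℚ) < X by linarith)
        (show (0:ℚ) < X - 1 by linarith)) (show (0:ℚ) < (q:ℚ) - 1 by linarith)]
    have hcast : ((q ^ (2 * h) - 1 : ℕ) : ℤ) = (q : ℤ) ^ (2 * h) - 1 := by
      rw [Nat.cast_sub (Nat.one_le_pow _ _ (show 0 < q by omega))]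
      push_cast
      ring
    have hd_lbZ : (q : ℤ) ^ (2 * h) - (q : ℤ) ^ h ≤ (d : ℤ) := by
      have := hd_lb
      have hle : q ^ h ≤ q ^ (2 * h) := le_of_lt hqhlt
      push_cast [Nat.cast_sub hle] at this ⊢
      exact_mod_cast this
    rw [hcast] at key
    have l4 : (((4 : ℕ)) : ℤ) = 4 := by norm_num
    have l3 : (((3 : ℕ)) : ℤ) = 3 := by norm_num
    linarith [key, hceil, hd_lbZ, l4, l3]
end
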